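/- arXiv:2507.02441 — 8 statements merged into one kernel-verified Lean document; each statement's English description precedes it below -/
import Mathlib

section
/- Let K be a field, V a K-vector space, and Q : V → K a quadratic form whose polar form B is nondegenerate. Let c ∈ V with c ≠ 0, and let φ : V → V be a K-linear automorphism such that (a) φ(w) = w for every w ∈ V with B(c,w) = 0, and (b) φ(v) − v ∈ K·c for every v ∈ V (so, projectively, φ is a central collineation of PG(V) with centre c and axis the hyperplane c^⊥). If there exists x ∈ V with Q(x) = 0, Q(φ(x)) = 0 and φ(x) ∉ K·x, then φ preserves the quadric of Q: for every v ∈ V, Q(v) = 0 if and only if Q(φ(v)) = 0. -/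
/-!
A linear map fixing the hyperplane `c^⊥` pointwise and moving every vector along `c` has the
form `v ↦ v + l B(c,v) c`, and for such a map `Q(φ v) = Q v + l B(c,v)² (1 + l Q(c))`.
If `x` and `φ x ≠ x` are both singular then `l B(c,x) ≠ 0`, which forces `1 + l Q(c) = 0`:
`φ` is then an isometry of `Q`.
-/

open Module LinearMap

theorem LinearMap.exists_eq_transvection_of_fixes_ker {K V : Type*} [Field K] [AddCommGroup V]
    [Module K V] {f : V →ₗ[K] V} {β : Dual K V} {c : V}
    (hfix : ∀ w, β w = 0 → f w = w) (hmove : ∀ v, f v - v ∈ K ∙ c) :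
    ∃ l : K, f = transvection (l • β) c := by
  by_cases hβ : β = 0
  · refine ⟨0, LinearMap.ext fun v ↦ ?_⟩
    simp [hfix v (by simp [hβ])]
  obtain ⟨w₀, hw₀⟩ : ∃ w₀, β w₀ ≠ 0 := by
    by_contra! h
    exact hβ (LinearMap.ext h)
  obtain ⟨μ, hμ⟩ := Submodule.mem_span_singleton.mp (hmove w₀)
  refine ⟨μ / β w₀, LinearMap.ext fun v ↦ ?_⟩
  have hker := hfix (v - (β v / β w₀) • w₀) (by simp [div_mul_cancel₀ _ hw₀])
  rw [map_sub, map_smul, sub_eq_iff_eq_add, ← sub_add_cancel (f w₀) w₀, ← hμ] at hker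
  rw [transvection.apply, LinearMap.smul_apply, smul_eq_mul, hker]
  module

theorem QuadraticMap.apply_transvection_polarBilin {R V : Type*} [CommRing R] [AddCommGroup V]
    [Module R V] (Q : QuadraticForm R V) (l : R) (c v : V) :
    Q (transvection (l • Q.polarBilin c) c v) = Q v + l * polar Q c v ^ 2 * (1 + l * Q c) := by
  rw [transvection.apply, QuadraticMap.map_add Q, QuadraticMap.map_smul, polar_smul_right,
    polar_comm]
  simp only [LinearMap.smul_apply, QuadraticMap.polarBilin_apply_apply, smul_eq_mul]
  ring

theorem QuadraticMap.apply_transvection_polarBilin_eq_of_isotropic {R V : Type*} [CommRing R]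
    [NoZeroDivisors R] [AddCommGroup V] [Module R V] (Q : QuadraticForm R V) {l : R} {c x : V}
    (hx : Q x = 0) (hτx : Q (transvection (l • Q.polarBilin c) c x) = 0)
    (hmoved : transvection (l • Q.polarBilin c) c x ≠ x) (v : V) :
    Q (transvection (l • Q.polarBilin c) c v) = Q v := by
  have hl : l * polar Q c x ≠ 0 := by
    contrapose! hmoved
    simp [transvection.apply, hmoved]
  have hdet : 1 + l * Q c = 0 := by
    rw [apply_transvection_polarBilin, hx, zero_add] at hτx
    have h : l * polar Q c x * polar Q c x * (1 + l * Q c) = 0 := by linear_combination hτx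
    exact (mul_eq_zero.mp h).resolve_left (mul_ne_zero hl (right_ne_zero_of_mul hl))
  rw [apply_transvection_polarBilin, hdet, mul_zero, add_zero]

theorem central_collineation_preserves_quadric_general
    {K V : Type*} [Field K] [AddCommGroup V] [Module K V]
    (Q : QuadraticForm K V)
    (c : V)
    (φ : V ≃ₗ[K] V)
    (haxis : ∀ w : V, QuadraticMap.polar (⇑Q) c w = 0 → φ w = w)
    (hcentre : ∀ v : V, φ v - v ∈ Submodule.span K ({c} : Set V))
    (hmoves : ∃ x : V, Q x = 0 ∧ Q (φ x) = 0 ∧ φ x ∉ Submodule.span K ({x} : Set V)) :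
    ∀ v : V, Q v = 0 ↔ Q (φ v) = 0 := by
  obtain ⟨l, hφ⟩ := exists_eq_transvection_of_fixes_ker (f := φ.toLinearMap)
    (β := Q.polarBilin c) haxis hcentre
  replace hφ (v : V) : φ v = transvection (l • Q.polarBilin c) c v := LinearMap.congr_fun hφ v
  obtain ⟨x, hx, hφx, hxs⟩ := hmoves
  rw [hφ] at hφx hxs
  have hmoved : transvection (l • Q.polarBilin c) c x ≠ x := fun h ↦
    hxs (by rw [h]; exact Submodule.mem_span_singleton_self x)
  intro v
  rw [hφ, Q.apply_transvection_polarBilin_eq_of_isotropic hx hφx hmoved]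

/-- Let `Q` be a quadratic form on a `K`-vector space `V` whose polar
form is nondegenerate, let `c ≠ 0`, and let `φ` be a linear automorphism of `V` that fixes
every vector of the hyperplane `c^⊥` and moves every vector `v` by an element of `K·c`
(a central collineation with centre `c` and axis `c^⊥`).  If `φ` maps some singular point
to a different singular point, then `φ` preserves the quadric of `Q`. -/
theorem central_collineation_preserves_quadric
    {K V : Type*} [Field K] [AddCommGroup V] [Module K V]
    (Q : QuadraticForm K V)
    (hnd : ∀ v : V, (∀ w : V, QuadraticMap.polar (⇑Q) v w = 0) → v = 0)
    (c : V) (hc : c ≠ 0)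
    (φ : V ≃ₗ[K] V)
    (haxis : ∀ w : V, QuadraticMap.polar (⇑Q) c w = 0 → φ w = w)
    (hcentre : ∀ v : V, φ v - v ∈ Submodule.span K ({c} : Set V))
    (hmoves : ∃ x : V, Q x = 0 ∧ Q (φ x) = 0 ∧ φ x ∉ Submodule.span K ({x} : Set V)) :
    ∀ v : V, Q v = 0 ↔ Q (φ v) = 0 :=
  central_collineation_preserves_quadric_general Q c φ haxis hcentre hmoves
end

section
/- Let K be a field and V a finite-dimensional K-vector space, and Q : V → K a quadratic form whose polar form B is nondegenerate; assume there exists a nonzero v ∈ V with Q(v) = 0 (Witt index at least 1). Let G ≤ V be a subspace of codimension 2 and set L := G^⊥. Assume that either L ∩ G = {0}, or L ⊆ G and Q(v) ≠ 0 for every nonzero v ∈ L (i.e., the line L of PG(V) is not a tangent line of the quadric). Let φ : V → V be a K-linear automorphism which is a similitude of Q (there is λ ∈ K, λ ≠ 0, with Q(φ(v)) = λ·Q(v) for all v) and which satisfies φ(g) ∈ K·g for every g ∈ G (projectively, φ fixes the subhyperplane PG(G) pointwise). Then φ is, up to a scalar, a product of two reflections: there exist codimension-1 subspaces H₁, H₂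 of V, K-linear automorphisms ψ₁, ψ₂ of V each of which preserves the quadric {v | Q(v) = 0} and satisfies ψᵢ(h) ∈ K·h for every h ∈ Hᵢ, and a scalar c ∈ K, c ≠ 0, such that φ = c · (ψ₂ ∘ ψ₁). -/
/-- The perp of a subspace `S` with respect to the polar form of a quadratic form `Q`:
`S^⊥ = {v ∈ V | B(s,v) = 0 for all s ∈ S}`. -/
noncomputable def polarPerp {K V : Type*} [Field K] [AddCommGroup V] [Module K V]
    (Q : QuadraticForm K V) (S : Submodule K V) : Submodule K V :=
  LinearMap.BilinForm.orthogonal (QuadraticMap.polarBilin Q) S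

/-!
Rescaling `φ` by its eigenvalue on `G` gives an isometry `σ` fixing `G` pointwise, so every
displacement `σ v - v` lies in the plane `L = G^⊥`. If all displacements were isotropic they would
span either a line, which forces `σ = 1`, or all of `L`, which is not totally isotropic because
`L` is not a tangent line. So unless `σ = 1`, some `x = σ v - v` is non-isotropic; the reflection
`τ` in `x` fixes `G` and sends `σ v` to `v`, hence `τ φ` fixes the hyperplane `G + K v`
projectively and `φ = τ (τ φ)`.

When `G = 0`, take an isotropic `u`: either `φ u ∈ u^⊥ = K u`, or the reflection in `φ u - u`
sends `φ u` to `u`; either way `K u` is a fixed hyperplane.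
-/

open Module (finrank)
open QuadraticMap

section

variable {K V : Type*} [Field K] [AddCommGroup V] [Module K V]

-- Projectively: `f` fixes every point of `PG(H)`, i.e. every vector of `H` is an eigenvector.
variable (K) in
def FixesSomeHyperplane (f : V → V) : Prop :=
  ∃ H : Submodule K V, finrank K H + 1 = finrank K V ∧ ∀ h ∈ H, ∃ a : K, f h = a • h

lemma exists_forall_mem_eq_smul {S : Submodule K V} {f : V →ₗ[K] V}
    (h : ∀ s ∈ S, ∃ a : K, f s = a • s) : ∃ a : K, ∀ s ∈ S, f s = a • s := by
  have hS : ∀ s ∈ S, f s ∈ S := fun s hs => by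
    obtain ⟨a, ha⟩ := h s hs
    exact ha ▸ S.smul_mem a hs
  obtain ⟨a, ha⟩ := LinearMap.exists_eq_smul_id_of_forall_notLinearIndependent
    (f := f.restrict hS) fun s hli => by
      obtain ⟨b, hb⟩ := h s s.2
      have := LinearIndependent.pair_iff.mp hli b (-1) (Subtype.ext (by simp [hb]))
      exact one_ne_zero (neg_eq_zero.mp this.2)
  exact ⟨a, fun s hs => by simpa using congr_arg Subtype.val (LinearMap.congr_fun ha ⟨s, hs⟩)⟩

lemma fixesSomeHyperplane_of_map_eq_smul (hV : finrank K V = 2) {u : V} (hu : u ≠ 0)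
    (f : V →ₗ[K] V) (c : K) (hfu : f u = c • u) : FixesSomeHyperplane K f := by
  refine ⟨K ∙ u, by rw [finrank_span_singleton hu, hV], fun h hh => ⟨c, ?_⟩⟩
  obtain ⟨t, rfl⟩ := Submodule.mem_span_singleton.mp hh
  rw [map_smul, hfu, smul_comm]

section FiniteDimensional

variable [FiniteDimensional K V]

lemma exists_finrank_add_one_eq [Nontrivial V] :
    ∃ H : Submodule K V, finrank K H + 1 = finrank K V := by
  obtain ⟨v, hv⟩ := exists_ne (0 : V)
  obtain ⟨f, hf⟩ : ∃ f : Module.Dual K V, f v ≠ 0 := by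
    by_contra! h
    exact hv ((Module.forall_dual_apply_eq_zero_iff K v).mp h)
  exact ⟨_, Module.Dual.finrank_ker_add_one_of_ne_zero (f := f) (by rintro rfl; exact hf rfl)⟩

lemma fixesSomeHyperplane_of_forall_eq_smul [Nontrivial V] {f : V → V} (a : K)
    (hf : ∀ v, f v = a • v) : FixesSomeHyperplane K f :=
  let ⟨H, hH⟩ := exists_finrank_add_one_eq (K := K) (V := V)
  ⟨H, hH, fun h _ => ⟨a, hf h⟩⟩

lemma fixesSomeHyperplane_of_eq_smul_on_sup {G : Submodule K V}
    (hG : finrank K G + 2 = finrank K V) {v : V} (hv : v ∉ G) (f : V →ₗ[K] V) (a : K)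
    (hfG : ∀ g ∈ G, f g = a • g) (hfv : f v = a • v) : FixesSomeHyperplane K f := by
  refine ⟨G ⊔ K ∙ v, by rw [Submodule.finrank_sup_span_singleton hv]; omega,
    fun h hh => ⟨a, ?_⟩⟩
  obtain ⟨g, hg, z, hz, rfl⟩ := Submodule.mem_sup.mp hh
  obtain ⟨t, rfl⟩ := Submodule.mem_span_singleton.mp hz
  rw [map_add, map_smul, hfG g hg, hfv, smul_add, smul_comm]

end FiniteDimensional

variable (Q : QuadraticForm K V)

lemma polar_self_eq_two_mul (x : V) : polar Q x x = 2 * Q x := by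
  rw [polar_self, two_smul, two_mul]

lemma mem_polarPerp {S : Submodule K V} {v : V} :
    v ∈ polarPerp Q S ↔ ∀ s ∈ S, polar Q s v = 0 :=
  Iff.rfl

lemma le_polarPerp_self {S : Submodule K V} (hS : ∀ s ∈ S, Q s = 0) : S ≤ polarPerp Q S :=
  fun t ht s hs => by simp [polar, hS s hs, hS t ht, hS _ (S.add_mem hs ht)]

lemma exists_mem_map_ne_zero_of_anisotropic_radical {S : Submodule K V} (hS : S ≠ ⊥)
    (hrad : ∀ v ∈ S ⊓ polarPerp Q S, v ≠ 0 → Q v ≠ 0) : ∃ s ∈ S, Q s ≠ 0 := by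
  by_contra! hiso
  obtain ⟨s, hs, hs0⟩ := Submodule.exists_mem_ne_zero_of_ne_bot hS
  exact hrad s ⟨hs, le_polarPerp_self Q hiso hs⟩ hs0 (hiso s hs)

lemma forall_map_apply_eq_of_apply_eq_self {σ : V →ₗ[K] V} {μ : K}
    (hσ : ∀ v, Q (σ v) = μ * Q v) {g : V} (hg : σ g = g) (hQg : Q g ≠ 0) (v : V) :
    Q (σ v) = Q v := by
  have hμ : μ = 1 := mul_right_cancel₀ hQg (by rw [one_mul, ← hσ, hg])
  rw [hσ, hμ, one_mul]

section Nondegenerate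

variable {Q} (hnd : ∀ v : V, (∀ w : V, polar Q v w = 0) → v = 0)
include hnd

lemma polarBilin_nondegenerate : (polarBilin Q).Nondegenerate :=
  ⟨fun v hv => hnd v hv, fun v hv => hnd v fun w => polar_comm Q v w ▸ hv w⟩

lemma polarBilin_ne_zero {x : V} (hx : x ≠ 0) : polarBilin Q x ≠ 0 := fun h =>
  hx (hnd x fun w => LinearMap.congr_fun h w)

variable [FiniteDimensional K V]

lemma finrank_polarPerp (S : Submodule K V) :
    finrank K (polarPerp Q S) = finrank K V - finrank K S :=
  LinearMap.BilinForm.finrank_orthogonal (polarBilin_nondegenerate hnd) S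

lemma polarPerp_polarPerp (S : Submodule K V) : polarPerp Q (polarPerp Q S) = S :=
  LinearMap.BilinForm.orthogonal_orthogonal (polarBilin_nondegenerate hnd)
    (fun x y h => (polar_comm Q y x).trans h) S

lemma finrank_ker_polarBilin_add_one {x : V} (hx : x ≠ 0) :
    finrank K (LinearMap.ker (polarBilin Q x)) + 1 = finrank K V :=
  Module.Dual.finrank_ker_add_one_of_ne_zero (polarBilin_ne_zero hnd hx)

end Nondegenerate

section Reflection

variable {Q} {x : V}

lemma inv_smul_polarBilin_apply_self (hx : Q x ≠ 0) : ((Q x)⁻¹ • polarBilin Q x) x = 2 := by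
  rw [LinearMap.smul_apply, polarBilin_apply_apply, polar_self_eq_two_mul, smul_eq_mul]
  field_simp

noncomputable def reflection (hx : Q x ≠ 0) : V ≃ₗ[K] V :=
  Module.reflection (inv_smul_polarBilin_apply_self hx)

lemma reflection_apply (hx : Q x ≠ 0) (v : V) :
    reflection hx v = v - ((Q x)⁻¹ * polar Q x v) • x := by
  simp [reflection, Module.reflection_apply, mul_smul]

lemma reflection_involutive (hx : Q x ≠ 0) : Function.Involutive (reflection hx) :=
  Module.involutive_reflection _

lemma map_reflection (hx : Q x ≠ 0) (v : V) : Q (reflection hx v) = Q v := by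
  rw [reflection_apply, sub_eq_add_neg, ← neg_smul, QuadraticMap.map_add (⇑Q),
    QuadraticMap.map_smul, polar_smul_right, polar_comm, smul_eq_mul, smul_eq_mul]
  linear_combination (polar Q v x ^ 2 * (Q x)⁻¹) * mul_inv_cancel₀ hx

lemma reflection_apply_of_polar_eq_zero (hx : Q x ≠ 0) {v : V} (hv : polar Q x v = 0) :
    reflection hx v = v := by
  simp [reflection_apply, hv]

lemma reflection_sub_apply {p q : V} (hpq : Q p = Q q) (h : Q (p - q) ≠ 0) :
    reflection h p = q := by
  have hpol : polar Q (p - q) p = Q (p - q) := by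
    rw [polar_sub_left, polar_self_eq_two_mul, polar_comm, sub_eq_add_neg p q,
      QuadraticMap.map_add (⇑Q), QuadraticMap.map_neg, polar_neg_right, hpq]
    ring
  rw [reflection_apply, hpol, inv_mul_cancel₀ h, one_smul, sub_sub_cancel]

end Reflection

-- The identity qualifies too: it preserves the quadric and fixes every hyperplane.
def IsIsometricReflection (τ : V ≃ₗ[K] V) : Prop :=
  (∀ v, Q (τ v) = Q v) ∧ Function.Involutive τ ∧ FixesSomeHyperplane K τ

lemma isIsometricReflection_refl [FiniteDimensional K V] [Nontrivial V] :
    IsIsometricReflection Q (LinearEquiv.refl K V) :=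
  ⟨fun _ => rfl, fun _ => rfl,
    fixesSomeHyperplane_of_forall_eq_smul 1 fun v => (one_smul K v).symm⟩

variable {Q} in
lemma isIsometricReflection_reflection [FiniteDimensional K V]
    (hnd : ∀ v : V, (∀ w : V, polar Q v w = 0) → v = 0) {x : V} (hx : Q x ≠ 0) :
    IsIsometricReflection Q (reflection hx) := by
  have hx0 : x ≠ 0 := by rintro rfl; exact hx Q.map_zero
  refine ⟨map_reflection hx, reflection_involutive hx,
    ⟨_, finrank_ker_polarBilin_add_one hnd hx0, fun h hh => ⟨1, ?_⟩⟩⟩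
  rw [one_smul]
  exact reflection_apply_of_polar_eq_zero hx hh

section Isometry

variable {Q} {σ : V →ₗ[K] V} (hσ : ∀ v, Q (σ v) = Q v)
include hσ

lemma polar_map_map (v w : V) : polar Q (σ v) (σ w) = polar Q v w := by
  simp only [polar, ← map_add, hσ]

lemma polar_map_sub_self_right (w : V) : polar Q w (σ w - w) = -Q (σ w - w) := by
  have h := QuadraticMap.map_add (⇑Q) w (σ w - w)
  rw [add_sub_cancel, hσ] at h
  linear_combination -h

lemma polar_map_sub_self_of_apply_eq {k : V} (hk : σ k = k) (v : V) :
    polar Q (σ v - v) k = 0 := by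
  have h := polar_map_map hσ v k
  rw [hk] at h
  rw [polar_sub_left, h, sub_self]

lemma map_sub_self_mem_polarPerp {S : Submodule K V} (hS : ∀ s ∈ S, σ s = s) (v : V) :
    σ v - v ∈ polarPerp Q S :=
  (mem_polarPerp Q).mpr fun s hs => by
    rw [polar_comm]
    exact polar_map_sub_self_of_apply_eq hσ (hS s hs) v

lemma apply_eq_self_of_map_sub_self_mem_span_singleton
    (hnd : ∀ v : V, (∀ w : V, polar Q v w = 0) → v = 0) (hiso : ∀ v, Q (σ v - v) = 0) {u : V}
    (hu : ∀ v, σ v - v ∈ K ∙ u) (v : V) : σ v = v := by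
  obtain rfl | hu0 := eq_or_ne u 0
  · simpa [sub_eq_zero] using hu v
  have hdisp : ∀ v, ∃ t : K, σ v - v = t • u := fun v => by
    obtain ⟨t, ht⟩ := Submodule.mem_span_singleton.mp (hu v)
    exact ⟨t, ht.symm⟩
  obtain ⟨w, hw⟩ : ∃ w, polar Q u w ≠ 0 := by
    by_contra! h
    exact hu0 (hnd u h)
  have hσw : σ w = w := by
    obtain ⟨t, ht⟩ := hdisp w
    have h := polar_map_sub_self_right hσ w
    rw [hiso, neg_zero, ht, polar_smul_right, smul_eq_mul, polar_comm] at h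
    rw [← sub_eq_zero, ht, (mul_eq_zero.mp h).resolve_right hw, zero_smul]
  obtain ⟨t, ht⟩ := hdisp v
  have h := polar_map_sub_self_of_apply_eq hσ hσw v
  rw [ht, polar_smul_left, smul_eq_mul] at h
  rw [← sub_eq_zero, ht, (mul_eq_zero.mp h).resolve_right hw, zero_smul]

lemma exists_map_sub_self_ne_zero [FiniteDimensional K V]
    (hnd : ∀ v : V, (∀ w : V, polar Q v w = 0) → v = 0) {L : Submodule K V}
    (hL : finrank K L = 2) (hLQ : ∃ l ∈ L, Q l ≠ 0) (hσL : ∀ v, σ v - v ∈ L)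
    (hσ1 : ∃ v, σ v ≠ v) : ∃ v, Q (σ v - v) ≠ 0 := by
  by_contra! hiso
  obtain ⟨v₀, hv₀⟩ := hσ1
  set D := LinearMap.range (σ - LinearMap.id)
  have hD : ∀ v, σ v - v ∈ D := fun v => ⟨v, rfl⟩
  have hDL : D < L := by
    refine lt_of_le_of_ne (by rintro _ ⟨v, rfl⟩; exact hσL v) ?_
    rintro rfl
    obtain ⟨_, ⟨v, rfl⟩, hv⟩ := hLQ
    exact hv (hiso v)
  have hD1 : finrank K D = 1 := by
    have := Submodule.finrank_lt_finrank_of_lt hDL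
    have := Submodule.one_le_finrank_iff.mpr
      ((Submodule.ne_bot_iff D).mpr ⟨_, hD v₀, sub_ne_zero.mpr hv₀⟩)
    omega
  rw [eq_span_singleton_of_mem_of_finrank_eq_one hD1 (hD v₀) (sub_ne_zero.mpr hv₀)] at hD
  exact hv₀ (apply_eq_self_of_map_sub_self_mem_span_singleton hσ hnd hiso hD v₀)

end Isometry

variable [FiniteDimensional K V] {Q} (hnd : ∀ v : V, (∀ w : V, polar Q v w = 0) → v = 0)
include hnd

lemma exists_isIsometricReflection_comp_of_finrank_eq_two (hV : finrank K V = 2) {u : V}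
    (hu : u ≠ 0) (hQu : Q u = 0) (φ : V →ₗ[K] V) (hφu : Q (φ u) = 0) :
    ∃ τ : V ≃ₗ[K] V, IsIsometricReflection Q τ ∧ FixesSomeHyperplane K (τ ∘ φ) := by
  have : Nontrivial V := nontrivial_of_ne u 0 hu
  by_cases h : polar Q u (φ u) = 0
  · have hker : LinearMap.ker (polarBilin Q u) = K ∙ u := by
      refine eq_span_singleton_of_mem_of_finrank_eq_one ?_ ?_ hu
      · have := finrank_ker_polarBilin_add_one hnd hu
        omega
      · simp [hQu]
    obtain ⟨c, hc⟩ := Submodule.mem_span_singleton.mp (show φ u ∈ K ∙ u from hker ▸ h)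
    exact ⟨_, isIsometricReflection_refl Q, fixesSomeHyperplane_of_map_eq_smul hV hu φ c hc.symm⟩
  · have hQ : Q (φ u - u) ≠ 0 := by
      rw [sub_eq_add_neg, QuadraticMap.map_add (⇑Q), QuadraticMap.map_neg, polar_neg_right, hQu,
        hφu, polar_comm]
      simpa using h
    refine ⟨reflection hQ, isIsometricReflection_reflection hnd hQ,
      fixesSomeHyperplane_of_map_eq_smul hV hu ((reflection hQ).toLinearMap ∘ₗ φ) 1 ?_⟩
    rw [one_smul]
    exact reflection_sub_apply (by rw [hφu, hQu]) hQ

lemma exists_isIsometricReflection_comp_of_ne_bot {G : Submodule K V}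
    (hG : finrank K G + 2 = finrank K V) (hG0 : G ≠ ⊥)
    (hrad : ∀ v ∈ polarPerp Q G ⊓ G, v ≠ 0 → Q v ≠ 0) {φ : V →ₗ[K] V} {lam : K} (hlam : lam ≠ 0)
    (hφ : ∀ v, Q (φ v) = lam * Q v) {a : K} (ha : ∀ g ∈ G, φ g = a • g) :
    ∃ τ : V ≃ₗ[K] V, IsIsometricReflection Q τ ∧ FixesSomeHyperplane K (τ ∘ φ) := by
  obtain ⟨g, hgG, hQg⟩ :=
    exists_mem_map_ne_zero_of_anisotropic_radical Q hG0 (by rwa [inf_comm] at hrad)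
  have : Nontrivial V := nontrivial_of_ne g 0 (by rintro rfl; exact hQg Q.map_zero)
  have ha0 : a ≠ 0 := by
    rintro rfl
    have h := hφ g
    rw [ha g hgG, zero_smul, QuadraticMap.map_zero] at h
    exact mul_ne_zero hlam hQg h.symm
  set σ : V →ₗ[K] V := a⁻¹ • φ
  have hφσ : ∀ v, φ v = a • σ v := fun v => by simp [σ, smul_smul, mul_inv_cancel₀ ha0]
  have hσG : ∀ g ∈ G, σ g = g := fun g hg => by simp [σ, ha g hg, smul_smul, inv_mul_cancel₀ ha0]
  have hσ : ∀ v, Q (σ v) = Q v := forall_map_apply_eq_of_apply_eq_self Q (μ := a⁻¹ * a⁻¹ * lam)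
    (fun v => by rw [LinearMap.smul_apply, QuadraticMap.map_smul, hφ, smul_eq_mul]; ring)
    (hσG g hgG) hQg
  by_cases hσ1 : ∀ v, σ v = v
  · refine ⟨_, isIsometricReflection_refl Q, fixesSomeHyperplane_of_forall_eq_smul a fun v => ?_⟩
    simp [hφσ, hσ1]
  have hL : finrank K (polarPerp Q G) = 2 := by rw [finrank_polarPerp hnd]; omega
  obtain ⟨v, hv⟩ := exists_map_sub_self_ne_zero hσ hnd hL
    (exists_mem_map_ne_zero_of_anisotropic_radical Q (Submodule.one_le_finrank_iff.mp (by omega))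
      (by rwa [polarPerp_polarPerp hnd]))
    (map_sub_self_mem_polarPerp hσ hσG) (by simpa using hσ1)
  have hvG : v ∉ G := fun h => hv (by rw [hσG v h, sub_self, QuadraticMap.map_zero])
  have hτG : ∀ g ∈ G, reflection hv g = g := fun g hg => reflection_apply_of_polar_eq_zero hv
    (by rw [polar_comm]; exact map_sub_self_mem_polarPerp hσ hσG v g hg)
  refine ⟨reflection hv, isIsometricReflection_reflection hnd hv,
    fixesSomeHyperplane_of_eq_smul_on_sup hG hvG ((reflection hv).toLinearMap ∘ₗ φ) a
      (fun g hg => ?_) ?_⟩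
  · simp [ha g hg, hτG g hg]
  · simp [hφσ, reflection_sub_apply (hσ v) hv]

end

/-- Let `Q` be a quadratic form of Witt index at least `1` on a finite
dimensional `K`-vector space `V`, with nondegenerate polar form.  Let `G` be a subspace of
codimension `2` with `L := G^⊥`, and suppose the line `L` is not a tangent line
(`L ∩ G = 0`, or `L ⊆ G` and `Q` is anisotropic on `L`).  Then every similitude `φ` of `Q`
fixing the subhyperplane `PG(G)` pointwise is, up to a nonzero scalar, the product of two
reflections (automorphisms preserving the quadric and fixing a projective hyperplane
pointwise). -/
theorem similitude_fixing_subhyperplane_is_product_of_two_reflections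
    {K V : Type*} [Field K] [AddCommGroup V] [Module K V] [FiniteDimensional K V]
    (Q : QuadraticForm K V)
    (hnd : ∀ v : V, (∀ w : V, QuadraticMap.polar (⇑Q) v w = 0) → v = 0)
    (hisotropic : ∃ v : V, v ≠ 0 ∧ Q v = 0)
    (G : Submodule K V) (hG : Module.finrank K G + 2 = Module.finrank K V)
    (L : Submodule K V) (hL : L = polarPerp Q G)
    (hnotTangent : L ⊓ G = ⊥ ∨ (L ≤ G ∧ ∀ v ∈ L, v ≠ 0 → Q v ≠ 0))
    (φ : V ≃ₗ[K] V)
    (hsim : ∃ lam : K, lam ≠ 0 ∧ ∀ v : V, Q (φ v) = lam * Q v)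
    (hfixG : ∀ g ∈ G, ∃ a : K, φ g = a • g) :
    ∃ (H₁ H₂ : Submodule K V) (ψ₁ ψ₂ : V ≃ₗ[K] V) (c : K),
      Module.finrank K H₁ + 1 = Module.finrank K V ∧
      Module.finrank K H₂ + 1 = Module.finrank K V ∧
      (∀ v : V, Q v = 0 ↔ Q (ψ₁ v) = 0) ∧
      (∀ v : V, Q v = 0 ↔ Q (ψ₂ v) = 0) ∧
      (∀ h ∈ H₁, ∃ a : K, ψ₁ h = a • h) ∧
      (∀ h ∈ H₂, ∃ a : K, ψ₂ h = a • h) ∧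
      c ≠ 0 ∧
      (∀ v : V, φ v = c • ψ₂ (ψ₁ v)) := by
  obtain ⟨lam, hlam, hφ⟩ := hsim
  have hrad : ∀ v ∈ polarPerp Q G ⊓ G, v ≠ 0 → Q v ≠ 0 := by
    subst hL
    rcases hnotTangent with h | ⟨-, haniso⟩
    · simp [h]
    · exact fun v hv => haniso v hv.1
  have key : ∃ τ : V ≃ₗ[K] V, IsIsometricReflection Q τ ∧ FixesSomeHyperplane K (τ ∘ φ) := by
    obtain rfl | hG0 := eq_or_ne G ⊥
    · obtain ⟨u, hu, hQu⟩ := hisotropic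
      exact exists_isIsometricReflection_comp_of_finrank_eq_two hnd (by simpa using hG.symm) hu hQu
        φ (by rw [LinearEquiv.coe_coe, hφ, hQu, mul_zero])
    · obtain ⟨a, ha⟩ := exists_forall_mem_eq_smul (f := φ.toLinearMap) hfixG
      exact exists_isIsometricReflection_comp_of_ne_bot hnd hG hG0 hrad hlam hφ ha
  obtain ⟨τ, ⟨hτQ, hτ, H₂, hH₂, hτH₂⟩, H₁, hH₁, hτφH₁⟩ := key
  refine ⟨H₁, H₂, φ.trans τ, τ, 1, hH₁, hH₂, fun v => ?_, fun v => by rw [hτQ], hτφH₁, hτH₂,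
    one_ne_zero, fun v => by simp [hτ (φ v)]⟩
  simp [hτQ, hφ, hlam]
end

section
/- Let (P, 𝓛) be a thick generalized quadrangle in which every line contains at least 4 points. Let p₁, p₂ ∈ P and let S := {q ∈ P | ¬(q ⊥ p₁) and ¬(q ⊥ p₂)} be the set of points opposite both p₁ and p₂. Then the collinearity graph on S is connected: for all q, q' ∈ S there exist n ∈ ℕ and points x₀, x₁, …, x_n ∈ S with x₀ = q, x_n = q', and xᵢ ⊥ xᵢ₊₁ for every i < n. -/
/-- Two points of a point-line geometry `(P, 𝓛)` are collinear if some line contains both. -/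
def GeomCollinear {P : Type*} (𝓛 : Set (Set P)) (p q : P) : Prop :=
  ∃ l ∈ 𝓛, p ∈ l ∧ q ∈ l

/-!
Let `S` be the set of points opposite `p₁` and `p₂`. For `x, y ∈ S` and a line `M` through `x`
we find `m ∈ M ∩ S` and `w ∈ S` with `m ⊥ w ⊥ y`. Let `z` be the point of `M` collinear with `y`;
if `z ∈ S` take `m = z`, `w = y`. Otherwise pick a line `L ∋ y` missing `z` such that each point
of `M \ S` other than `z` is collinear with a point of `L \ S`: if `M \ S = {z}` any such line
works, else `M \ S ⊆ {z, a}` with `a ⊥ pᵢ`, and `L` joins `y` to its projection onto the line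
`a pᵢ`. As `L` has at least four points, some `w ∈ L \ {y}` lies in `S`, and its projection onto
`M` is neither `z` nor collinear with a point of `L \ S`, hence lies in `S`.
-/

theorem Set.exists_mem_ne_ne_ne_of_four_le_encard {α : Type*} {s : Set α} (h : 4 ≤ s.encard)
    (a b c : α) : ∃ d ∈ s, d ≠ a ∧ d ≠ b ∧ d ≠ c := by
  by_contra! hs
  have hsub : s ⊆ {a, b, c} := fun d hd => by
    have := hs d hd
    simp only [Set.mem_insert_iff, Set.mem_singleton_iff]
    tauto
  have h4 := h.trans (Set.encard_le_encard hsub)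
  grw [Set.encard_insert_le, Set.encard_insert_le, Set.encard_singleton] at h4
  norm_num at h4

section

variable {P : Type*} {𝓛 : Set (Set P)}

namespace GeomCollinear

theorem symm {p q : P} (h : GeomCollinear 𝓛 p q) : GeomCollinear 𝓛 q p :=
  let ⟨l, hl, hp, hq⟩ := h
  ⟨l, hl, hq, hp⟩

theorem of_mem {l : Set P} (hl : l ∈ 𝓛) {p q : P} (hp : p ∈ l) (hq : q ∈ l) :
    GeomCollinear 𝓛 p q :=
  ⟨l, hl, hp, hq⟩

theorem refl_left {p q : P} (h : GeomCollinear 𝓛 p q) : GeomCollinear 𝓛 p p :=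
  let ⟨l, hl, hp, _⟩ := h
  ⟨l, hl, hp, hp⟩

end GeomCollinear

variable (𝓛) in
def HasUniqueProjections : Prop :=
  ∀ p : P, ∀ l ∈ 𝓛, p ∉ l → ∃! q : P, q ∈ l ∧ GeomCollinear 𝓛 p q

variable (𝓛) in
def bothOpposite (p₁ p₂ : P) : Set P :=
  {q | ¬ GeomCollinear 𝓛 q p₁ ∧ ¬ GeomCollinear 𝓛 q p₂}

namespace HasUniqueProjections

variable {l M L : Set P} {p p₁ p₂ x y z : P}

theorem exists_collinear (hGQ : HasUniqueProjections 𝓛) (hl : l ∈ 𝓛) (hp : p ∉ l) :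
    ∃ q ∈ l, GeomCollinear 𝓛 p q :=
  let ⟨q, ⟨hq, hpq⟩, _⟩ := hGQ p l hl hp
  ⟨q, hq, hpq⟩

theorem eq_of_collinear (hGQ : HasUniqueProjections 𝓛) (hl : l ∈ 𝓛) {a b : P} (hp : p ∉ l)
    (ha : a ∈ l) (hb : b ∈ l) (hpa : GeomCollinear 𝓛 p a) (hpb : GeomCollinear 𝓛 p b) :
    a = b :=
  (hGQ p l hl hp).unique ⟨ha, hpa⟩ ⟨hb, hpb⟩

theorem exists_line_mem_not_mem (hGQ : HasUniqueProjections 𝓛)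
    (hlines : 1 < {l ∈ 𝓛 | y ∈ l}.encard) (hyz : y ≠ z) : ∃ L ∈ 𝓛, y ∈ L ∧ z ∉ L := by
  obtain ⟨l₁, l₂, ⟨hl₁, hyl₁⟩, ⟨hl₂, hyl₂⟩, hne⟩ := Set.one_lt_encard_iff.1 hlines
  by_contra! hz
  have hsub : ∀ {l l'}, l ∈ 𝓛 → l' ∈ 𝓛 → y ∈ l → y ∈ l' → l ⊆ l' :=
    fun hl hl' hyl hyl' r hr => by_contra fun hr' => hyz <|
      hGQ.eq_of_collinear hl' hr' hyl' (hz _ hl' hyl') (.of_mem hl hr hyl)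
        (.of_mem hl hr (hz _ hl hyl))
  exact hne ((hsub hl₁ hl₂ hyl₁ hyl₂).antisymm (hsub hl₂ hl₁ hyl₂ hyl₁))

theorem exists_ne_mem_bothOpposite (hGQ : HasUniqueProjections 𝓛) (hL : L ∈ 𝓛)
    (hL4 : 4 ≤ L.encard) (hyL : y ∈ L) (hy : y ∈ bothOpposite 𝓛 p₁ p₂) :
    ∃ u ∈ L, u ≠ y ∧ u ∈ bothOpposite 𝓛 p₁ p₂ := by
  have hp₁L : p₁ ∉ L := fun h => hy.1 (.of_mem hL hyL h)
  have hp₂L : p₂ ∉ L := fun h => hy.2 (.of_mem hL hyL h)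
  obtain ⟨c₁, hc₁L, hc₁⟩ := hGQ.exists_collinear hL hp₁L
  obtain ⟨c₂, hc₂L, hc₂⟩ := hGQ.exists_collinear hL hp₂L
  obtain ⟨u, huL, huy, huc₁, huc₂⟩ := Set.exists_mem_ne_ne_ne_of_four_le_encard hL4 y c₁ c₂
  exact ⟨u, huL, huy, fun h => huc₁ (hGQ.eq_of_collinear hL hp₁L huL hc₁L h.symm hc₁),
    fun h => huc₂ (hGQ.eq_of_collinear hL hp₂L huL hc₂L h.symm hc₂)⟩

theorem exists_mem_collinear_of_line {S : Set P} (hGQ : HasUniqueProjections 𝓛) (hM : M ∈ 𝓛)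
    (hL : L ∈ 𝓛) (hyL : y ∈ L) (hyM : y ∉ M) (hzM : z ∈ M) (hzL : z ∉ L)
    (hzy : GeomCollinear 𝓛 z y)
    (hcover : ∀ m ∈ M, m ∉ S → m = z ∨ ∃ h ∈ L, h ∉ S ∧ GeomCollinear 𝓛 m h)
    {u : P} (huL : u ∈ L) (huy : u ≠ y) (hu : u ∈ S) :
    ∃ m ∈ M, m ∈ S ∧ GeomCollinear 𝓛 m u := by
  have hML : ∀ w ∈ M, w ∉ L := fun w hwM hwL =>
    hyM (hGQ.eq_of_collinear hL hzL hwL hyL (.of_mem hM hzM hwM) hzy ▸ hwM)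
  obtain ⟨c, hcM, hcu⟩ := hGQ.exists_collinear hM fun huM => hML u huM huL
  refine ⟨c, hcM, ?_, hcu.symm⟩
  by_contra hc
  rcases hcover c hcM hc with rfl | ⟨h, hhL, hh, hch⟩
  · exact huy (hGQ.eq_of_collinear hL hzL huL hyL hcu.symm hzy)
  · exact hh (hGQ.eq_of_collinear hL (hML c hcM) huL hhL hcu.symm hch ▸ hu)

theorem exists_line_of_collinear_ne (hGQ : HasUniqueProjections 𝓛) (hM : M ∈ 𝓛) (hpM : p ∉ M)
    (hyM : y ∉ M) (hyp : ¬ GeomCollinear 𝓛 y p) (hzM : z ∈ M) (hzy : GeomCollinear 𝓛 z y)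
    {a : P} (haM : a ∈ M) (hap : GeomCollinear 𝓛 a p) (haz : a ≠ z) :
    ∃ L ∈ 𝓛, y ∈ L ∧ z ∉ L ∧ ∃ g ∈ L, GeomCollinear 𝓛 g p ∧ GeomCollinear 𝓛 a g := by
  obtain ⟨A, hA, haA, hpA⟩ := hap
  obtain ⟨g, hgA, L, hL, hyL, hgL⟩ :=
    hGQ.exists_collinear hA fun hyA => hyp (.of_mem hA hyA hpA)
  refine ⟨L, hL, hyL, fun hzL => ?_, g, hgL, .of_mem hA hgA hpA, .of_mem hA haA hgA⟩
  have haL : a ∉ L := fun haL =>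
    haz (hGQ.eq_of_collinear hM hyM haM hzM (.of_mem hL hyL haL) hzy.symm)
  have hgz : g = z :=
    hGQ.eq_of_collinear hL haL hgL hzL (.of_mem hA haA hgA) (.of_mem hM haM hzM)
  exact haz (hGQ.eq_of_collinear hM hpM haM hzM (.of_mem hA hpA haA) (hgz ▸ .of_mem hA hpA hgA))

theorem exists_line_of_not_mem_bothOpposite (hGQ : HasUniqueProjections 𝓛)
    (hlines : 1 < {l ∈ 𝓛 | y ∈ l}.encard) (hM : M ∈ 𝓛) (hxM : x ∈ M)
    (hx : x ∈ bothOpposite 𝓛 p₁ p₂) (hy : y ∈ bothOpposite 𝓛 p₁ p₂) (hyM : y ∉ M)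
    (hzM : z ∈ M) (hzy : GeomCollinear 𝓛 z y) (hz : z ∉ bothOpposite 𝓛 p₁ p₂) :
    ∃ L ∈ 𝓛, y ∈ L ∧ z ∉ L ∧ ∀ m ∈ M, m ∉ bothOpposite 𝓛 p₁ p₂ →
      m = z ∨ ∃ h ∈ L, h ∉ bothOpposite 𝓛 p₁ p₂ ∧ GeomCollinear 𝓛 m h := by
  have hp₁M : p₁ ∉ M := fun h => hx.1 (.of_mem hM hxM h)
  have hp₂M : p₂ ∉ M := fun h => hx.2 (.of_mem hM hxM h)
  obtain ⟨a₁, ha₁M, ha₁⟩ := hGQ.exists_collinear hM hp₁M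
  obtain ⟨a₂, ha₂M, ha₂⟩ := hGQ.exists_collinear hM hp₂M
  have hbad : ∀ m ∈ M, m ∉ bothOpposite 𝓛 p₁ p₂ → m = a₁ ∨ m = a₂ := by
    intro m hm hmS
    have hmp : GeomCollinear 𝓛 m p₁ ∨ GeomCollinear 𝓛 m p₂ := by
      by_contra! h
      exact hmS h
    exact hmp.imp (fun h => hGQ.eq_of_collinear hM hp₁M hm ha₁M h.symm ha₁)
      (fun h => hGQ.eq_of_collinear hM hp₂M hm ha₂M h.symm ha₂)
  rcases eq_or_ne a₁ z with h₁ | h₁ <;> rcases eq_or_ne a₂ z with h₂ | h₂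
  · obtain ⟨L, hL, hyL, hzL⟩ := hGQ.exists_line_mem_not_mem hlines fun h => hyM (h ▸ hzM)
    exact ⟨L, hL, hyL, hzL, fun m hm hmS => .inl ((hbad m hm hmS).elim (·.trans h₁) (·.trans h₂))⟩
  · obtain ⟨L, hL, hyL, hzL, g, hgL, hgp, hag⟩ :=
      hGQ.exists_line_of_collinear_ne hM hp₂M hyM hy.2 hzM hzy ha₂M ha₂.symm h₂
    refine ⟨L, hL, hyL, hzL, fun m hm hmS => (hbad m hm hmS).imp (·.trans h₁) ?_⟩
    rintro rfl
    exact ⟨g, hgL, fun hg => hg.2 hgp, hag⟩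
  · obtain ⟨L, hL, hyL, hzL, g, hgL, hgp, hag⟩ :=
      hGQ.exists_line_of_collinear_ne hM hp₁M hyM hy.1 hzM hzy ha₁M ha₁.symm h₁
    refine ⟨L, hL, hyL, hzL, fun m hm hmS => ((hbad m hm hmS).imp ?_ (·.trans h₂)).symm⟩
    rintro rfl
    exact ⟨g, hgL, fun hg => hg.1 hgp, hag⟩
  · exact ((hbad z hzM hz).elim (fun h => h₁ h.symm) (fun h => h₂ h.symm)).elim

theorem exists_path_of_mem_line (hGQ : HasUniqueProjections 𝓛)
    (hlines : 1 < {l ∈ 𝓛 | y ∈ l}.encard) (hline4 : ∀ l ∈ 𝓛, 4 ≤ l.encard) (hM : M ∈ 𝓛)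
    (hxM : x ∈ M) (hx : x ∈ bothOpposite 𝓛 p₁ p₂) (hy : y ∈ bothOpposite 𝓛 p₁ p₂) :
    ∃ m ∈ M, m ∈ bothOpposite 𝓛 p₁ p₂ ∧ ∃ w ∈ bothOpposite 𝓛 p₁ p₂,
      GeomCollinear 𝓛 m w ∧ GeomCollinear 𝓛 w y := by
  by_cases hyM : y ∈ M
  · exact ⟨y, hyM, hy, y, hy, .of_mem hM hyM hyM, .of_mem hM hyM hyM⟩
  obtain ⟨z, hzM, hyz⟩ := hGQ.exists_collinear hM hyM
  by_cases hz : z ∈ bothOpposite 𝓛 p₁ p₂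
  · exact ⟨z, hzM, hz, y, hy, hyz.symm, hyz.refl_left⟩
  obtain ⟨L, hL, hyL, hzL, hcover⟩ :=
    hGQ.exists_line_of_not_mem_bothOpposite hlines hM hxM hx hy hyM hzM hyz.symm hz
  obtain ⟨u, huL, huy, hu⟩ := hGQ.exists_ne_mem_bothOpposite hL (hline4 L hL) hyL hy
  obtain ⟨m, hmM, hm, hmu⟩ :=
    hGQ.exists_mem_collinear_of_line hM hL hyL hyM hzM hzL hyz.symm hcover huL huy hu
  exact ⟨m, hmM, hm, u, hu, hmu, .of_mem hL huL hyL⟩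

end HasUniqueProjections

end

theorem GQ_points_opposite_two_points_connected_general
    {P : Type*} (𝓛 : Set (Set P))
    -- thick generalized quadrangle axioms
    (hpoint3 : ∀ p : P, 3 ≤ {l ∈ 𝓛 | p ∈ l}.encard)
    (hGQ : ∀ p : P, ∀ l ∈ 𝓛, p ∉ l → ∃! q : P, q ∈ l ∧ GeomCollinear 𝓛 p q)
    -- every line contains at least 4 points
    (hline4 : ∀ l ∈ 𝓛, 4 ≤ l.encard)
    (p₁ p₂ : P)
    (S : Set P)
    (hS : S = {q : P | ¬ GeomCollinear 𝓛 q p₁ ∧ ¬ GeomCollinear 𝓛 q p₂}) :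
    ∀ q ∈ S, ∀ q' ∈ S, ∃ (n : ℕ) (x : ℕ → P),
      x 0 = q ∧ x n = q' ∧ (∀ i ≤ n, x i ∈ S) ∧
      ∀ i < n, GeomCollinear 𝓛 (x i) (x (i + 1)) := by
  subst hS
  intro q hq q' hq'
  obtain ⟨M, hM, hqM⟩ : ∃ M ∈ 𝓛, q ∈ M :=
    let ⟨M, hM⟩ := Set.one_le_encard_iff_nonempty.1 ((by norm_num : (1 : ℕ∞) ≤ 3).trans (hpoint3 q))
    ⟨M, hM⟩
  obtain ⟨m, hmM, hm, w, hw, hmw, hwq'⟩ :=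
    HasUniqueProjections.exists_path_of_mem_line hGQ ((by norm_num : (1 : ℕ∞) < 3).trans_le
      (hpoint3 q')) hline4 hM hqM hq hq'
  refine ⟨3, fun i => [q, m, w, q'].getD i q', rfl, rfl, ?_, ?_⟩
  · intro i hi
    interval_cases i <;> assumption
  · intro i hi
    interval_cases i
    exacts [.of_mem hM hqM hmM, hmw, hwq']

/-- In a thick generalized quadrangle with at least `4` points per line,
the collinearity graph on the set `S` of points opposite two given points `p₁, p₂` is
connected. -/
theorem GQ_points_opposite_two_points_connected
    {P : Type*} (𝓛 : Set (Set P))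
    -- thick generalized quadrangle axioms
    (hline3 : ∀ l ∈ 𝓛, 3 ≤ l.encard)
    (hpoint3 : ∀ p : P, 3 ≤ {l ∈ 𝓛 | p ∈ l}.encard)
    (hunique : ∀ p q : P, p ≠ q → ∀ l₁ ∈ 𝓛, ∀ l₂ ∈ 𝓛,
      p ∈ l₁ → q ∈ l₁ → p ∈ l₂ → q ∈ l₂ → l₁ = l₂)
    (hGQ : ∀ p : P, ∀ l ∈ 𝓛, p ∉ l → ∃! q : P, q ∈ l ∧ GeomCollinear 𝓛 p q)
    -- every line contains at least 4 points
    (hline4 : ∀ l ∈ 𝓛, 4 ≤ l.encard)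
    (p₁ p₂ : P)
    (S : Set P)
    (hS : S = {q : P | ¬ GeomCollinear 𝓛 q p₁ ∧ ¬ GeomCollinear 𝓛 q p₂}) :
    ∀ q ∈ S, ∀ q' ∈ S, ∃ (n : ℕ) (x : ℕ → P),
      x 0 = q ∧ x n = q' ∧ (∀ i ≤ n, x i ∈ S) ∧
      ∀ i < n, GeomCollinear 𝓛 (x i) (x (i + 1)) :=
  GQ_points_opposite_two_points_connected_general 𝓛 hpoint3 hGQ hline4 p₁ p₂ S hS
end

section
/- Let (P, 𝓛) be a thick polar space of rank at least 3. Let p₁, p₂ ∈ P and let S := {q ∈ P | ¬(q ⊥ p₁) and ¬(q ⊥ p₂)} be the set of points opposite both p₁ and p₂. Then the collinearity graph on S is connected: for all q, q' ∈ S there exist n ∈ ℕ and points x₀, x₁, …, x_n ∈ S with x₀ = q, x_n = q', and xᵢ ⊥ xᵢ₊₁ for every i < n. -/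
open Set Relation

theorem Relation.ReflTransGen.exists_seq {α : Type*} {r : α → α → Prop} {a b : α}
    (h : ReflTransGen r a b) :
    ∃ (n : ℕ) (x : ℕ → α), x 0 = a ∧ x n = b ∧ ∀ i < n, r (x i) (x (i + 1)) := by
  induction h using ReflTransGen.head_induction_on with
  | refl => exact ⟨0, fun _ => b, rfl, rfl, fun i hi => absurd hi (Nat.not_lt_zero i)⟩
  | @head a c hac _ ih =>
    obtain ⟨n, x, hx0, hxn, hx⟩ := ih
    refine ⟨n + 1, fun | 0 => a | i + 1 => x i, rfl, hxn, ?_⟩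
    rintro (_ | i) hi
    · show r a (x 0)
      exact hx0 ▸ hac
    · exact hx i (by omega)

namespace PolarSpace

variable {P : Type*} {𝓛 : Set (Set P)}

def perp (𝓛 : Set (Set P)) (p : P) : Set P := {x | GeomCollinear 𝓛 x p}

local notation:max p "ᗮ" => perp 𝓛 p

def oppositeBoth (𝓛 : Set (Set P)) (p₁ p₂ : P) : Set P := (perp 𝓛 p₁)ᶜ ∩ (perp 𝓛 p₂)ᶜ

def IsThick (𝓛 : Set (Set P)) : Prop := ∀ l ∈ 𝓛, 3 ≤ l.encard

def IsPartialLinearSpace (𝓛 : Set (Set P)) : Prop :=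
  ∀ p q : P, p ≠ q → ∀ l₁ ∈ 𝓛, ∀ l₂ ∈ 𝓛, p ∈ l₁ → q ∈ l₁ → p ∈ l₂ → q ∈ l₂ → l₁ = l₂

def BuekenhoutShult (𝓛 : Set (Set P)) : Prop :=
  ∀ p : P, ∀ l ∈ 𝓛, p ∉ l →
    (∃! q : P, q ∈ l ∧ GeomCollinear 𝓛 p q) ∨ (∀ q ∈ l, GeomCollinear 𝓛 p q)

def RankAtLeastThree (𝓛 : Set (Set P)) : Prop :=
  ∀ l ∈ 𝓛, ∃ p : P, p ∉ l ∧ ∀ q ∈ l, GeomCollinear 𝓛 p q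

def IsSubspace (𝓛 : Set (Set P)) (X : Set P) : Prop :=
  ∀ l ∈ 𝓛, ∀ a ∈ l, ∀ b ∈ l, a ≠ b → a ∈ X → b ∈ X → l ⊆ X

def IsNondegenerate (𝓛 : Set (Set P)) (X : Set P) : Prop :=
  ∀ t ∈ X, ∃ s ∈ X, t ∉ perp 𝓛 s

theorem mem_perp_comm {x y : P} : x ∈ yᗮ ↔ y ∈ xᗮ :=
  ⟨fun ⟨l, hl, hx, hy⟩ => ⟨l, hl, hy, hx⟩, fun ⟨l, hl, hy, hx⟩ => ⟨l, hl, hx, hy⟩⟩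

theorem mem_perp_of_mem {l : Set P} (hl : l ∈ 𝓛) {x y : P} (hx : x ∈ l) (hy : y ∈ l) :
    x ∈ yᗮ :=
  ⟨l, hl, hx, hy⟩

theorem mem_perp_self (hpt : ∀ p : P, ∃ l ∈ 𝓛, p ∈ l) (p : P) : p ∈ pᗮ :=
  let ⟨_, hl, hp⟩ := hpt p
  mem_perp_of_mem hl hp hp

theorem IsThick.exists_mem_ne_ne (hth : IsThick 𝓛) {l : Set P} (hl : l ∈ 𝓛) (a b : P) :
    ∃ c ∈ l, c ≠ a ∧ c ≠ b := by
  by_contra! h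
  have hsub : l ⊆ {a, b} := fun c hc =>
    (eq_or_ne c a).elim Or.inl fun hca => Or.inr (h c hc hca)
  have := (hth l hl).trans ((encard_le_encard hsub).trans (encard_insert_le _ _))
  rw [encard_singleton] at this
  norm_num at this

theorem isSubspace_univ : IsSubspace 𝓛 univ :=
  fun _ _ _ _ _ _ _ _ _ x _ => mem_univ x

theorem IsSubspace.inter {X Y : Set P} (hX : IsSubspace 𝓛 X) (hY : IsSubspace 𝓛 Y) :
    IsSubspace 𝓛 (X ∩ Y) :=
  fun l hl a ha b hb hab haXY hbXY =>
    subset_inter (hX l hl a ha b hb hab haXY.1 hbXY.1) (hY l hl a ha b hb hab haXY.2 hbXY.2)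

theorem IsSubspace.eq_of_mem {X : Set P} (hX : IsSubspace 𝓛 X) {l : Set P} (hl : l ∈ 𝓛)
    {e a b : P} (he : e ∈ l) (heX : e ∉ X) (ha : a ∈ l) (hb : b ∈ l) (haX : a ∈ X)
    (hbX : b ∈ X) : a = b := by
  by_contra hab
  exact heX (hX l hl a ha b hb hab haX hbX he)

theorem BuekenhoutShult.isSubspace_perp (hBS : BuekenhoutShult 𝓛) (p : P) :
    IsSubspace 𝓛 pᗮ := by
  intro l hl a ha b hb hab hap hbp x hx
  by_cases hpl : p ∈ l
  · exact mem_perp_of_mem hl hx hpl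
  rcases hBS p l hl hpl with ⟨c, -, hc⟩ | hall
  · exact absurd ((hc a ⟨ha, mem_perp_comm.1 hap⟩).trans (hc b ⟨hb, mem_perp_comm.1 hbp⟩).symm)
      hab
  · exact mem_perp_comm.1 (hall x hx)

theorem BuekenhoutShult.exists_mem_perp (hBS : BuekenhoutShult 𝓛) (hth : IsThick 𝓛) (p : P)
    {l : Set P} (hl : l ∈ 𝓛) : ∃ x ∈ l, x ∈ pᗮ := by
  by_cases hpl : p ∈ l
  · exact ⟨p, hpl, mem_perp_of_mem hl hpl hpl⟩
  rcases hBS p l hl hpl with ⟨x, ⟨hx, hpx⟩, -⟩ | hall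
  · exact ⟨x, hx, mem_perp_comm.1 hpx⟩
  · obtain ⟨x, hx, -⟩ := hth.exists_mem_ne_ne hl p p
    exact ⟨x, hx, mem_perp_comm.1 (hall x hx)⟩

theorem exists_mem_oppositeBoth_or_subset (hth : IsThick 𝓛) (hBS : BuekenhoutShult 𝓛)
    {l : Set P} (hl : l ∈ 𝓛) (p₁ p₂ : P) :
    (∃ a ∈ l, a ∈ oppositeBoth 𝓛 p₁ p₂) ∨ l ⊆ p₁ᗮ ∨ l ⊆ p₂ᗮ := by
  by_contra! h
  obtain ⟨hS, h₁, h₂⟩ := h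
  obtain ⟨e₁, he₁, he₁p⟩ := not_subset.1 h₁
  obtain ⟨e₂, he₂, he₂p⟩ := not_subset.1 h₂
  obtain ⟨f₁, hf₁, hf₁p⟩ := hBS.exists_mem_perp hth p₁ hl
  obtain ⟨f₂, hf₂, hf₂p⟩ := hBS.exists_mem_perp hth p₂ hl
  obtain ⟨a, ha, haf₁, haf₂⟩ := hth.exists_mem_ne_ne hl f₁ f₂
  exact hS a ha ⟨fun h => haf₁ ((hBS.isSubspace_perp p₁).eq_of_mem hl he₁ he₁p ha hf₁ h hf₁p),
    fun h => haf₂ ((hBS.isSubspace_perp p₂).eq_of_mem hl he₂ he₂p ha hf₂ h hf₂p)⟩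

section Subspace

variable {X : Set P}

theorem IsSubspace.inter_perp_subset_perp_of_not_mem_perp (hth : IsThick 𝓛)
    (hBS : BuekenhoutShult 𝓛) (hX : IsSubspace 𝓛 X) {α β t : P} (hα : α ∈ X) (hαβ : α ∉ βᗮ)
    (ht : t ∈ αᗮ) (h : X ∩ αᗮ ∩ βᗮ ⊆ tᗮ) : X ∩ αᗮ ⊆ tᗮ := by
  rintro w ⟨hwX, hwα⟩
  by_cases hwβ : w ∈ βᗮ
  · exact h ⟨⟨hwX, hwα⟩, hwβ⟩
  rcases eq_or_ne w α with rfl | hwα'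
  · exact mem_perp_comm.1 ht
  obtain ⟨ν, hν, hwν, hαν⟩ := hwα
  obtain ⟨x, hxν, hxβ⟩ := hBS.exists_mem_perp hth β hν
  have hxα : x ≠ α := by rintro rfl; exact hαβ hxβ
  have htx : x ∈ tᗮ := h ⟨⟨hX ν hν w hwν α hαν hwα' hwX hα hxν, mem_perp_of_mem hν hxν hαν⟩, hxβ⟩
  exact hBS.isSubspace_perp t ν hν x hxν α hαν hxα htx (mem_perp_comm.1 ht) hwν

theorem IsSubspace.inter_perp_inter_perp_subset_perp (hth : IsThick 𝓛)
    (hBS : BuekenhoutShult 𝓛) (hX : IsSubspace 𝓛 X) {u t s : P} (h : X ∩ uᗮ ⊆ tᗮ)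
    (hs : s ∈ X) (hst : s ∉ tᗮ) : X ∩ tᗮ ∩ sᗮ ⊆ uᗮ := by
  rintro c ⟨⟨hcX, hct⟩, hcs⟩
  have hcs' : c ≠ s := by rintro rfl; exact hst hct
  obtain ⟨σ, hσ, hcσ, hsσ⟩ := hcs
  obtain ⟨x, hxσ, hxu⟩ := hBS.exists_mem_perp hth u hσ
  have hxt : x ∈ tᗮ := h ⟨hX σ hσ c hcσ s hsσ hcs' hcX hs hxσ, hxu⟩
  rwa [(hBS.isSubspace_perp t).eq_of_mem hσ hsσ hst hcσ hxσ hct hxt]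

theorem IsSubspace.inter_perp_subset_perp_symm (hth : IsThick 𝓛) (hBS : BuekenhoutShult 𝓛)
    (hX : IsSubspace 𝓛 X) (hnd : IsNondegenerate 𝓛 X) {t u : P} (ht : t ∈ X) (hut : u ∈ tᗮ)
    (h : X ∩ uᗮ ⊆ tᗮ) : X ∩ tᗮ ⊆ uᗮ := by
  obtain ⟨s, hs, hts⟩ := hnd t ht
  exact hX.inter_perp_subset_perp_of_not_mem_perp hth hBS ht hts hut
    (hX.inter_perp_inter_perp_subset_perp hth hBS h hs (mt mem_perp_comm.1 hts))

theorem IsSubspace.eq_of_inter_perp_subset_perp (hth : IsThick 𝓛)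
    (hpt : ∀ p : P, ∃ l ∈ 𝓛, p ∈ l) (hBS : BuekenhoutShult 𝓛) (hX : IsSubspace 𝓛 X)
    (hnd : IsNondegenerate 𝓛 X) {z y : P} (hz : z ∈ X) (hy : y ∈ X) (h : X ∩ zᗮ ⊆ yᗮ) :
    z = y := by
  by_contra hzy
  obtain ⟨m, hm, hzm, hym⟩ := h ⟨hz, mem_perp_self hpt z⟩
  have hmz : ∀ ζ ∈ m, X ∩ ζᗮ ⊆ zᗮ := fun ζ hζ =>
    hX.inter_perp_subset_perp_symm hth hBS hnd (hX m hm z hzm y hym hzy hz hy hζ)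
      (mem_perp_of_mem hm hzm hζ) fun w hw => mem_perp_comm.1 <|
        hBS.isSubspace_perp w m hm z hzm y hym hzy (mem_perp_comm.1 hw.2)
          (mem_perp_comm.1 (h hw)) hζ
  obtain ⟨s, hs, hzs⟩ := hnd z hz
  obtain ⟨ζ, hζ, hζs⟩ := hBS.exists_mem_perp hth s hm
  exact hzs (mem_perp_comm.1 (hmz ζ hζ ⟨hs, mem_perp_comm.1 hζs⟩))

theorem IsSubspace.not_mem_perp_of_subset_union (hth : IsThick 𝓛) (hBS : BuekenhoutShult 𝓛)
    (hX : IsSubspace 𝓛 X) {p₁ p₂ : P} (hcov : X ⊆ p₁ᗮ ∪ p₂ᗮ) {α β : P} (hα : α ∈ X)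
    (hαp : α ∉ p₁ᗮ) (hβ : β ∈ X) (hβp : β ∉ p₂ᗮ) : β ∉ αᗮ := by
  rintro ⟨L, hL, hβL, hαL⟩
  rcases eq_or_ne α β with rfl | hαβ
  · exact (hcov hα).elim hαp hβp
  rcases exists_mem_oppositeBoth_or_subset hth hBS hL p₁ p₂ with ⟨γ, hγL, hγ₁, hγ₂⟩ | h | h
  · exact (hcov (hX L hL α hαL β hβL hαβ hα hβ hγL)).elim hγ₁ hγ₂
  · exact hαp (h hαL)
  · exact hβp (h hβL)

theorem IsSubspace.mem_perp_of_subset_union (hth : IsThick 𝓛) (hBS : BuekenhoutShult 𝓛)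
    (hX : IsSubspace 𝓛 X) {p₁ p₂ : P} (hcov : X ⊆ p₁ᗮ ∪ p₂ᗮ) {l : Set P} (hl : l ∈ 𝓛)
    (hlX : l ⊆ X) {e y w : P} (he : e ∈ l) (hep : e ∉ p₁ᗮ) (hy : y ∈ l) (hyp : y ∈ p₁ᗮ)
    (hw : w ∈ X) (hwp : w ∉ p₂ᗮ) : y ∈ wᗮ := by
  obtain ⟨x, hx, hxw⟩ := hBS.exists_mem_perp hth w hl
  by_cases hxp : x ∈ p₁ᗮ
  · rwa [(hBS.isSubspace_perp p₁).eq_of_mem hl he hep hy hx hyp hxp]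
  · exact absurd (mem_perp_comm.1 hxw)
      (hX.not_mem_perp_of_subset_union hth hBS hcov (hlX hx) hxp hw hwp)

theorem IsSubspace.subset_or_subset_of_subset_union (hth : IsThick 𝓛)
    (hpt : ∀ p : P, ∃ l ∈ 𝓛, p ∈ l) (hBS : BuekenhoutShult 𝓛) (hX : IsSubspace 𝓛 X)
    (hnd : IsNondegenerate 𝓛 X) (hlines : ∀ x ∈ X, ∃ y ∈ X, y ∈ xᗮ ∧ y ≠ x) {p₁ p₂ : P}
    (hcov : X ⊆ p₁ᗮ ∪ p₂ᗮ) : X ⊆ p₁ᗮ ∨ X ⊆ p₂ᗮ := by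
  by_contra h
  rw [not_or, not_subset, not_subset] at h
  obtain ⟨⟨z, hz, hzp⟩, ⟨w, hw, hwp⟩⟩ := h
  obtain ⟨y₁, hy₁, ⟨M, hM, hy₁M, hzM⟩, hy₁z⟩ := hlines z hz
  have hMX : M ⊆ X := hX M hM y₁ hy₁M z hzM hy₁z hy₁ hz
  obtain ⟨y, hyM, hyp⟩ := hBS.exists_mem_perp hth p₁ hM
  have hyz : y ≠ z := by rintro rfl; exact hzp hyp
  have hwz : w ∉ zᗮ := hX.not_mem_perp_of_subset_union hth hBS hcov hz hzp hw hwp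
  -- otherwise `X ∩ zᗮ ⊆ yᗮ`, forcing `z = y`
  obtain ⟨E, ⟨⟨hEX, hEz⟩, hEw⟩, hEy⟩ : ∃ E ∈ X ∩ zᗮ ∩ wᗮ, E ∉ yᗮ := by
    by_contra! hdom
    exact hyz (hX.eq_of_inter_perp_subset_perp hth hpt hBS hnd hz (hMX hyM)
      (hX.inter_perp_subset_perp_of_not_mem_perp hth hBS hz (mt mem_perp_comm.1 hwz)
        (mem_perp_of_mem hM hyM hzM) hdom)).symm
  have hEp : E ∈ p₂ᗮ := by
    by_contra hEp
    exact hX.not_mem_perp_of_subset_union hth hBS hcov hz hzp hEX hEp hEz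
  have hEw' : E ≠ w := by rintro rfl; exact hwz hEz
  obtain ⟨N, hN, hEN, hwN⟩ := hEw
  obtain ⟨c, hcM, hcz, hcy⟩ := hth.exists_mem_ne_ne hM z y
  have hcp : c ∉ p₁ᗮ := fun h => hcy ((hBS.isSubspace_perp p₁).eq_of_mem hM hzM hzp hcM hyM h hyp)
  have hEc : E ∈ cᗮ := hX.mem_perp_of_subset_union hth hBS (union_comm _ _ ▸ hcov) hN
    (hX N hN E hEN w hwN hEw' hEX hw) hwN hwp hEN hEp (hMX hcM) hcp
  exact hEy (mem_perp_comm.1 (hBS.isSubspace_perp E M hM z hzM c hcM hcz.symm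
    (mem_perp_comm.1 hEz) (mem_perp_comm.1 hEc) hyM))

end Subspace

theorem isNondegenerate_inter_perp (hth : IsThick 𝓛) (hBS : BuekenhoutShult 𝓛)
    (hnd : IsNondegenerate 𝓛 univ) {u v : P} (huv : u ∉ vᗮ) : IsNondegenerate 𝓛 (uᗮ ∩ vᗮ) := by
  intro t ht
  by_contra! h
  have hu : univ ∩ uᗮ ⊆ tᗮ :=
    isSubspace_univ.inter_perp_subset_perp_of_not_mem_perp hth hBS (mem_univ u) huv ht.1
      fun s hs => mem_perp_comm.1 (h s ⟨hs.1.2, hs.2⟩)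
  have ht' := isSubspace_univ.inter_perp_subset_perp_symm hth hBS hnd (mem_univ t)
    (mem_perp_comm.1 ht.1) hu
  exact huv (mem_perp_comm.1 (ht' ⟨mem_univ v, mem_perp_comm.1 ht.2⟩))

theorem exists_ne_mem_perp_mem_inter_perp (hth : IsThick 𝓛) (hpl : IsPartialLinearSpace 𝓛)
    (hBS : BuekenhoutShult 𝓛) (hrk : RankAtLeastThree 𝓛) {u v x : P} (huv : u ∉ vᗮ)
    (hx : x ∈ uᗮ ∩ vᗮ) : ∃ y ∈ uᗮ ∩ vᗮ, y ∈ xᗮ ∧ y ≠ x := by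
  have hxu : x ≠ u := by rintro rfl; exact huv hx.2
  obtain ⟨l, hl, hxl, hul⟩ := hx.1
  obtain ⟨r, hrl, hr⟩ := hrk l hl
  obtain ⟨m, hm, hrm, hum⟩ := hr u hul
  obtain ⟨y, hym, hyv⟩ := hBS.exists_mem_perp hth v hm
  have hxm : x ∉ m := fun hxm => hrl (hpl x u hxu m hm l hl hxm hum hxl hul ▸ hrm)
  have hru : r ≠ u := fun h => hrl (h ▸ hul)
  exact ⟨y, ⟨mem_perp_of_mem hm hym hum, hyv⟩,
    hBS.isSubspace_perp x m hm r hrm u hum hru (hr x hxl) (mem_perp_of_mem hl hul hxl) hym,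
    fun h => hxm (h ▸ hym)⟩

theorem inter_perp_subset_perp_swap (hth : IsThick 𝓛) (hBS : BuekenhoutShult 𝓛) {u v p : P}
    (hup : u ∉ pᗮ) (h : uᗮ ∩ vᗮ ⊆ pᗮ) : uᗮ ∩ pᗮ ⊆ vᗮ := by
  rintro t ⟨⟨ν, hν, htν, huν⟩, htp⟩
  obtain ⟨τ, hτν, hτv⟩ := hBS.exists_mem_perp hth v hν
  have hτp : τ ∈ pᗮ := h ⟨mem_perp_of_mem hν hτν huν, hτv⟩
  rwa [(hBS.isSubspace_perp p).eq_of_mem hν huν hup htν hτν htp hτp]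

theorem inter_perp_not_subset_perp (hth : IsThick 𝓛) (hBS : BuekenhoutShult 𝓛)
    (hnd : IsNondegenerate 𝓛 univ) {q q' a : P} (hqq' : q ∉ q'ᗮ) (ha : a ∈ qᗮ) (haq : a ≠ q) :
    ¬ qᗮ ∩ q'ᗮ ⊆ aᗮ := by
  intro h
  obtain ⟨m, hm, ham, hqm⟩ := ha
  obtain ⟨t, htm, htq'⟩ := hBS.exists_mem_perp hth q' hm
  obtain ⟨s, hs, hts⟩ :=
    isNondegenerate_inter_perp hth hBS hnd hqq' t ⟨mem_perp_of_mem hm htm hqm, htq'⟩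
  exact hts (hBS.isSubspace_perp s m hm a ham q hqm haq (mem_perp_comm.1 (h hs))
    (mem_perp_comm.1 hs.1) htm)

theorem inter_perp_not_subset_perp_of_subset (hth : IsThick 𝓛) (hBS : BuekenhoutShult 𝓛)
    (hnd : IsNondegenerate 𝓛 univ) {p q q' a : P} (hq'p : q' ∉ pᗮ) (hqq' : q ∉ q'ᗮ)
    (ha : a ∈ qᗮ) (haq : a ≠ q) (hq : qᗮ ∩ q'ᗮ ⊆ pᗮ) : ¬ aᗮ ∩ q'ᗮ ⊆ pᗮ := by
  intro ha'
  have hswap := inter_perp_subset_perp_swap hth hBS hq'p (inter_comm aᗮ q'ᗮ ▸ ha')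
  exact inter_perp_not_subset_perp hth hBS hnd hqq' ha haq fun x hx => hswap ⟨hx.2, hq hx⟩

theorem exists_ne_mem_perp_mem_oppositeBoth (hth : IsThick 𝓛) (hpl : IsPartialLinearSpace 𝓛)
    (hpt : ∀ p : P, ∃ l ∈ 𝓛, p ∈ l) (hBS : BuekenhoutShult 𝓛) (hrk : RankAtLeastThree 𝓛)
    {p₁ p₂ q : P} (hq : q ∈ oppositeBoth 𝓛 p₁ p₂) :
    ∃ a ∈ qᗮ, a ≠ q ∧ a ∈ oppositeBoth 𝓛 p₁ p₂ := by
  by_contra hne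
  obtain ⟨l, hl, hql⟩ := hpt q
  obtain ⟨r, hrl, hr⟩ := hrk l hl
  have hpencil : ∀ b ∈ l, b ≠ q → (r ∈ p₁ᗮ ∧ b ∈ p₁ᗮ) ∨ (r ∈ p₂ᗮ ∧ b ∈ p₂ᗮ) := by
    intro b hb hbq
    obtain ⟨m, hm, hrm, hbm⟩ := hr b hb
    have hqm : q ∉ m := fun h => hrl (hpl q b hbq.symm m hm l hl h hbm hql hb ▸ hrm)
    rcases exists_mem_oppositeBoth_or_subset hth hBS hm p₁ p₂ with ⟨a, ha, haS⟩ | h | h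
    · refine (hne ⟨a, ?_, fun h => hqm (h ▸ ha), haS⟩).elim
      exact hBS.isSubspace_perp q m hm r hrm b hbm (fun h => hrl (h ▸ hb)) (hr q hql)
        (mem_perp_of_mem hl hb hql) ha
    · exact Or.inl ⟨h hrm, h hbm⟩
    · exact Or.inr ⟨h hrm, h hbm⟩
  obtain ⟨b₁, hb₁, hb₁q, -⟩ := hth.exists_mem_ne_ne hl q q
  obtain ⟨b₂, hb₂, hb₂q, hb₂b₁⟩ := hth.exists_mem_ne_ne hl q b₁
  have hrp₁ : r ∈ p₁ᗮ := by
    by_contra hrp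
    have hb : ∀ b ∈ l, b ≠ q → b ∈ p₂ᗮ := fun b hb hbq =>
      ((hpencil b hb hbq).resolve_left fun h => hrp h.1).2
    exact hq.2 (hBS.isSubspace_perp p₂ l hl b₂ hb₂ b₁ hb₁ hb₂b₁ (hb b₂ hb₂ hb₂q)
      (hb b₁ hb₁ hb₁q) hql)
  have hrp₂ : r ∈ p₂ᗮ := by
    by_contra hrp
    have hb : ∀ b ∈ l, b ≠ q → b ∈ p₁ᗮ := fun b hb hbq =>
      ((hpencil b hb hbq).resolve_right fun h => hrp h.1).2
    exact hq.1 (hBS.isSubspace_perp p₁ l hl b₂ hb₂ b₁ hb₁ hb₂b₁ (hb b₂ hb₂ hb₂q)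
      (hb b₁ hb₁ hb₁q) hql)
  obtain ⟨m, hm, hrm, hqm⟩ := hr q hql
  obtain ⟨a, ham, har, haq⟩ := hth.exists_mem_ne_ne hm r q
  exact hne ⟨a, mem_perp_of_mem hm ham hqm, haq,
    fun h => har ((hBS.isSubspace_perp p₁).eq_of_mem hm hqm hq.1 ham hrm h hrp₁),
    fun h => har ((hBS.isSubspace_perp p₂).eq_of_mem hm hqm hq.2 ham hrm h hrp₂)⟩

theorem exists_mem_inter_perp_not_mem_perp (hth : IsThick 𝓛) (hpl : IsPartialLinearSpace 𝓛)
    (hBS : BuekenhoutShult 𝓛) (hrk : RankAtLeastThree 𝓛) {q a q' : P} (ha : a ∈ qᗮ)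
    (haq : a ≠ q) (hqq' : q ∉ q'ᗮ) : ∃ k ∈ qᗮ ∩ aᗮ, k ≠ q ∧ k ≠ a ∧ k ∉ q'ᗮ := by
  obtain ⟨l, hl, hal, hql⟩ := ha
  obtain ⟨r, hrl, hr⟩ := hrk l hl
  obtain ⟨m, hm, hrm, hqm⟩ := hr q hql
  have ham : a ∉ m := fun h => hrl (hpl a q haq m hm l hl h hqm hal hql ▸ hrm)
  have hma : m ⊆ aᗮ := hBS.isSubspace_perp a m hm r hrm q hqm (fun h => hrl (h ▸ hql))
    (hr a hal) (mem_perp_of_mem hl hql hal)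
  have hk : ∀ k ∈ m, k ≠ q → k ∉ q'ᗮ → ∃ k ∈ qᗮ ∩ aᗮ, k ≠ q ∧ k ≠ a ∧ k ∉ q'ᗮ :=
    fun k hk hkq hkq' => ⟨k, ⟨mem_perp_of_mem hm hk hqm, hma hk⟩, hkq, fun h => ham (h ▸ hk), hkq'⟩
  obtain ⟨k₁, hk₁, hk₁q, -⟩ := hth.exists_mem_ne_ne hm q q
  obtain ⟨k₂, hk₂, hk₂q, hk₂k₁⟩ := hth.exists_mem_ne_ne hm q k₁
  by_cases h₁ : k₁ ∈ q'ᗮ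
  · by_cases h₂ : k₂ ∈ q'ᗮ
    · exact absurd (hBS.isSubspace_perp q' m hm k₂ hk₂ k₁ hk₁ hk₂k₁ h₂ h₁ hqm) hqq'
    · exact hk k₂ hk₂ hk₂q h₂
  · exact hk k₁ hk₁ hk₁q h₁

section Connectivity

variable {p₁ p₂ : P}

theorem reflTransGen_or_subset_or_subset (hth : IsThick 𝓛) (hpl : IsPartialLinearSpace 𝓛)
    (hpt : ∀ p : P, ∃ l ∈ 𝓛, p ∈ l) (hBS : BuekenhoutShult 𝓛) (hnd : IsNondegenerate 𝓛 univ)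
    (hrk : RankAtLeastThree 𝓛) {q q' : P} (hq' : q' ∈ oppositeBoth 𝓛 p₁ p₂) :
    ReflTransGen (fun x y => x ∈ yᗮ ∧ y ∈ oppositeBoth 𝓛 p₁ p₂) q q' ∨
      q ∉ q'ᗮ ∧ (qᗮ ∩ q'ᗮ ⊆ p₁ᗮ ∨ qᗮ ∩ q'ᗮ ⊆ p₂ᗮ) := by
  by_cases hqq' : q ∈ q'ᗮ
  · exact Or.inl (ReflTransGen.single ⟨hqq', hq'⟩)
  by_cases hs : ∃ s ∈ qᗮ ∩ q'ᗮ, s ∈ oppositeBoth 𝓛 p₁ p₂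
  · obtain ⟨s, hs, hsS⟩ := hs
    exact Or.inl ((ReflTransGen.single ⟨mem_perp_comm.1 hs.1, hsS⟩).tail ⟨hs.2, hq'⟩)
  have hX : IsSubspace 𝓛 (qᗮ ∩ q'ᗮ) := (hBS.isSubspace_perp q).inter (hBS.isSubspace_perp q')
  refine Or.inr ⟨hqq', hX.subset_or_subset_of_subset_union hth hpt hBS
    (isNondegenerate_inter_perp hth hBS hnd hqq')
    (fun x hx => exists_ne_mem_perp_mem_inter_perp hth hpl hBS hrk hqq' hx) fun x hx => ?_⟩
  by_contra h
  rw [mem_union, not_or] at h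
  exact hs ⟨x, hx, h⟩

theorem reflTransGen_of_triangle (hth : IsThick 𝓛) (hpl : IsPartialLinearSpace 𝓛)
    (hpt : ∀ p : P, ∃ l ∈ 𝓛, p ∈ l) (hBS : BuekenhoutShult 𝓛) (hnd : IsNondegenerate 𝓛 univ)
    (hrk : RankAtLeastThree 𝓛) {q a k q' : P} (hq' : q' ∈ oppositeBoth 𝓛 p₁ p₂)
    (hqp : q ∉ p₁ᗮ) (hap : a ∉ p₂ᗮ) (hqq' : q ∉ q'ᗮ) (haq' : a ∉ q'ᗮ)
    (hq : qᗮ ∩ q'ᗮ ⊆ p₁ᗮ) (ha : aᗮ ∩ q'ᗮ ⊆ p₂ᗮ) (hk : k ∈ qᗮ ∩ aᗮ) (hkq : k ≠ q)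
    (hka : k ≠ a) (hkq' : k ∉ q'ᗮ) :
    k ∈ oppositeBoth 𝓛 p₁ p₂ ∧
      ReflTransGen (fun x y => x ∈ yᗮ ∧ y ∈ oppositeBoth 𝓛 p₁ p₂) k q' := by
  refine ⟨⟨fun h => hkq' (inter_perp_subset_perp_swap hth hBS hqp hq ⟨hk.1, h⟩),
    fun h => hkq' (inter_perp_subset_perp_swap hth hBS hap ha ⟨hk.2, h⟩)⟩, ?_⟩
  rcases reflTransGen_or_subset_or_subset hth hpl hpt hBS hnd hrk (q := k) hq' with
    h | ⟨-, hk₁ | hk₂⟩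
  · exact h
  · exact (inter_perp_not_subset_perp_of_subset hth hBS hnd hq'.1 hqq' hk.1 hkq hq hk₁).elim
  · exact (inter_perp_not_subset_perp_of_subset hth hBS hnd hq'.2 haq' hk.2 hka ha hk₂).elim

theorem reflTransGen_of_mem_oppositeBoth (hth : IsThick 𝓛) (hpl : IsPartialLinearSpace 𝓛)
    (hpt : ∀ p : P, ∃ l ∈ 𝓛, p ∈ l) (hBS : BuekenhoutShult 𝓛) (hnd : IsNondegenerate 𝓛 univ)
    (hrk : RankAtLeastThree 𝓛) {q q' : P} (hq : q ∈ oppositeBoth 𝓛 p₁ p₂)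
    (hq' : q' ∈ oppositeBoth 𝓛 p₁ p₂) :
    ReflTransGen (fun x y => x ∈ yᗮ ∧ y ∈ oppositeBoth 𝓛 p₁ p₂) q q' := by
  rcases reflTransGen_or_subset_or_subset hth hpl hpt hBS hnd hrk (q := q) hq' with
    h | ⟨hqq', hq_side⟩
  · exact h
  obtain ⟨a, haq, hne, ha⟩ := exists_ne_mem_perp_mem_oppositeBoth hth hpl hpt hBS hrk hq
  rcases reflTransGen_or_subset_or_subset hth hpl hpt hBS hnd hrk (q := a) hq' with
    h | ⟨haq', ha_side⟩
  · exact h.head ⟨mem_perp_comm.1 haq, ha⟩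
  obtain ⟨k, hk, hkq, hka, hkq'⟩ := exists_mem_inter_perp_not_mem_perp hth hpl hBS hrk haq hne hqq'
  rcases hq_side with hq₁ | hq₂ <;> rcases ha_side with ha₁ | ha₂
  · exact (inter_perp_not_subset_perp_of_subset hth hBS hnd hq'.1 hqq' haq hne hq₁ ha₁).elim
  · obtain ⟨hkS, h⟩ := reflTransGen_of_triangle hth hpl hpt hBS hnd hrk hq' hq.1 ha.2 hqq' haq'
      hq₁ ha₂ hk hkq hka hkq'
    exact h.head ⟨mem_perp_comm.1 hk.1, hkS⟩
  · obtain ⟨hkS, h⟩ := reflTransGen_of_triangle hth hpl hpt hBS hnd hrk hq' ha.1 hq.2 haq' hqq'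
      ha₁ hq₂ ⟨hk.2, hk.1⟩ hka hkq hkq'
    exact h.head ⟨mem_perp_comm.1 hk.1, hkS⟩
  · exact (inter_perp_not_subset_perp_of_subset hth hBS hnd hq'.2 hqq' haq hne hq₂ ha₂).elim

end Connectivity

end PolarSpace

/-- In a thick polar space of rank at least `3`, the collinearity graph on
the set `S` of points opposite two given points `p₁, p₂` is connected. -/
theorem polar_space_points_opposite_two_points_connected
    {P : Type*} (𝓛 : Set (Set P))
    -- thick polar space of rank at least 3: axioms
    (hline3 : ∀ l ∈ 𝓛, 3 ≤ l.encard)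
    (hunique : ∀ p q : P, p ≠ q → ∀ l₁ ∈ 𝓛, ∀ l₂ ∈ 𝓛,
      p ∈ l₁ → q ∈ l₁ → p ∈ l₂ → q ∈ l₂ → l₁ = l₂)
    (hpointline : ∀ p : P, ∃ l ∈ 𝓛, p ∈ l)
    (hBS : ∀ p : P, ∀ l ∈ 𝓛, p ∉ l →
      (∃! q : P, q ∈ l ∧ GeomCollinear 𝓛 p q) ∨ (∀ q ∈ l, GeomCollinear 𝓛 p q))
    (hnondeg : ∀ p : P, ∃ q : P, ¬ GeomCollinear 𝓛 p q)
    (hrank3 : ∀ l ∈ 𝓛, ∃ p : P, p ∉ l ∧ ∀ q ∈ l, GeomCollinear 𝓛 p q)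
    (p₁ p₂ : P)
    (S : Set P)
    (hS : S = {q : P | ¬ GeomCollinear 𝓛 q p₁ ∧ ¬ GeomCollinear 𝓛 q p₂}) :
    ∀ q ∈ S, ∀ q' ∈ S, ∃ (n : ℕ) (x : ℕ → P),
      x 0 = q ∧ x n = q' ∧ (∀ i ≤ n, x i ∈ S) ∧
      ∀ i < n, GeomCollinear 𝓛 (x i) (x (i + 1)) := by
  subst hS
  intro q hq q' hq'
  obtain ⟨n, x, hx0, hxn, hx⟩ := (PolarSpace.reflTransGen_of_mem_oppositeBoth hline3 hunique
    hpointline hBS (fun t _ => (hnondeg t).imp fun s hs => ⟨mem_univ s, hs⟩) hrank3 hq hq').exists_seq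
  refine ⟨n, x, hx0, hxn, fun i hi => ?_, fun i hi => (hx i hi).1⟩
  rcases i with _ | i
  · exact hx0 ▸ hq
  · exact (hx i (by omega)).2
end

section
/- Let K be a field with char K ≠ 2. On V = K⁷ with coordinates (x₁,…,x₇) and standard basis e₁,…,e₇, define the quadratic form q(x) := x₁x₇ + x₂x₆ + x₃x₅ − x₄². Let α := span(e₁,e₂,e₃), β := span(e₅,e₆,e₇), and for k ∈ K, k ≠ 0, let π_k := span(e₁, e₆, k⁻¹e₃ + e₄ + k·e₅) (a totally singular plane). For k ≠ 0 let d_k be the linear map given by the diagonal matrix diag(1,1,1,k,k²,k²,k²). Then: (1) q(d_k(x)) = k²·q(x) for all x, so d_k maps the quadric {q = 0} onto itself; (2) d_k fixes every vector of α, multiplies every vector of β by k², and maps π₁ onto π_k; and (3) every K-linear automorphism φ of V such that φ maps {q = 0} onto itself, φ(v) ∈ K·v for every v ∈ α ∪ β, and φ(π₁) = π_k, is equal to c·d_k for some scalar c ∈ K, c ≠ 0. In particular, the homology of the parabolic quadric with axes the planes α and β carrying π₁ to π_k is unique up to scalar. -/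
noncomputable section

/-- The parabolic quadratic form `q(x) = x₁x₇ + x₂x₆ + x₃x₅ − x₄²` on `K⁷`
(coordinates indexed by `Fin 7`). -/
def parabolicQ7 {K : Type*} [Field K] (x : Fin 7 → K) : K :=
  x 0 * x 6 + x 1 * x 5 + x 2 * x 4 - x 3 ^ 2

/-- The standard basis vector `eᵢ` of `K⁷`. -/
def stdBasis7 {K : Type*} [Field K] (i : Fin 7) : Fin 7 → K :=
  Pi.single i 1

/-- The linear map with matrix `diag(1,1,1,k,k²,k²,k²)`. -/
def diagMap7 {K : Type*} [Field K] (k : K) (x : Fin 7 → K) : Fin 7 → K :=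
  fun i => (if (i : ℕ) ≤ 2 then 1 else if (i : ℕ) = 3 then k else k ^ 2) * x i

/-- The plane `α = span(e₁,e₂,e₃)`. -/
def planeAlpha7 (K : Type*) [Field K] : Submodule K (Fin 7 → K) :=
  Submodule.span K {stdBasis7 0, stdBasis7 1, stdBasis7 2}

/-- The plane `β = span(e₅,e₆,e₇)`. -/
def planeBeta7 (K : Type*) [Field K] : Submodule K (Fin 7 → K) :=
  Submodule.span K {stdBasis7 4, stdBasis7 5, stdBasis7 6}

/-- The totally singular plane `π_k = span(e₁, e₆, k⁻¹e₃ + e₄ + k·e₅)`. -/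
def planePi7 {K : Type*} [Field K] (k : K) : Submodule K (Fin 7 → K) :=
  Submodule.span K {stdBasis7 0, stdBasis7 5, k⁻¹ • stdBasis7 2 + stdBasis7 3 + k • stdBasis7 4}

/-!
A linear map `φ` sending every vector of the plane `α` (resp. `β`) to a multiple of itself is a
homothety of some ratio `a` on `α` and `b` on `β`, so it is determined by `a`, `b` and
`w = φ e₄`. Pushing suitable isotropic vectors through `φ` forces `w ∈ K e₄`, and the single
condition `φ (e₃ + e₄ + e₅) ∈ π_k` then gives `w = k a e₄` and `b = k² a`, i.e. `φ = a d_k`.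
Coordinates are numbered from `0` in the code, so the paper's `eᵢ` is `stdBasis7 (i - 1)`.
-/

theorem Module.End.apply_eq_smul_of_mem_span {R V : Type*} [CommRing R] [AddCommGroup V]
    [Module R V] {f : Module.End R V} {s : Set V} {c : R} (h : ∀ v ∈ s, f v = c • v) {v : V}
    (hv : v ∈ Submodule.span R s) : f v = c • v :=
  Module.End.mem_eigenspace_iff.mp <|
    Submodule.span_le.mpr (fun u hu => Module.End.mem_eigenspace_iff.mpr (h u hu)) hv

theorem LinearMap.exists_eq_smul_on_of_forall_exists_eq_smul {K V : Type*} [Field K]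
    [AddCommGroup V] [Module K V] (f : V →ₗ[K] V) (W : Submodule K V)
    (h : ∀ v ∈ W, ∃ a : K, f v = a • v) : ∃ a : K, ∀ v ∈ W, f v = a • v := by
  have hW : ∀ v ∈ W, f v ∈ W := fun v hv => by
    obtain ⟨a, ha⟩ := h v hv
    exact ha ▸ W.smul_mem a hv
  obtain ⟨a, ha⟩ := (f.restrict hW).exists_eq_smul_id_of_forall_notLinearIndependent fun v => by
    obtain ⟨b, hb⟩ := h v v.2
    rw [LinearIndependent.pair_iff]
    intro hli
    have := (hli b (-1) (Subtype.ext (by simp [LinearMap.restrict_apply, hb]))).2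
    exact one_ne_zero (neg_eq_zero.mp this)
  exact ⟨a, fun v hv => congrArg Subtype.val (LinearMap.congr_fun ha ⟨v, hv⟩)⟩

theorem LinearEquiv.ne_zero_of_apply_eq_smul {K V : Type*} [Field K] [AddCommGroup V]
    [Module K V] (φ : V ≃ₗ[K] V) {v : V} (hv : v ≠ 0) {a : K} (h : φ v = a • v) : a ≠ 0 := by
  rintro rfl
  exact hv (φ.map_eq_zero_iff.mp (h.trans (zero_smul K v)))

namespace ParabolicQuadric7

variable {K : Type*} [Field K]

def diagLinearMap7 (k : K) : (Fin 7 → K) →ₗ[K] (Fin 7 → K) where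
  toFun := diagMap7 k
  map_add' x y := funext fun i => mul_add _ (x i) (y i)
  map_smul' c x := funext fun i => mul_left_comm _ c (x i)

@[simp]
theorem coe_diagLinearMap7 (k : K) : ⇑(diagLinearMap7 k) = diagMap7 k := rfl

theorem parabolicQ7_diagMap7 (k : K) (x : Fin 7 → K) :
    parabolicQ7 (diagMap7 k x) = k ^ 2 * parabolicQ7 x := by
  norm_num [parabolicQ7, diagMap7]
  ring

theorem diagMap7_stdBasis7 (k : K) (i : Fin 7) :
    diagMap7 k (stdBasis7 i) =
      (if (i : ℕ) ≤ 2 then 1 else if (i : ℕ) = 3 then k else k ^ 2) • stdBasis7 i := by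
  funext j
  by_cases h : j = i
  · subst h; simp [diagMap7, stdBasis7]
  · simp [diagMap7, stdBasis7, h]

theorem diagMap7_of_mem_planeAlpha7 (k : K) {v : Fin 7 → K} (hv : v ∈ planeAlpha7 K) :
    diagMap7 k v = v := by
  simpa using Module.End.apply_eq_smul_of_mem_span (f := diagLinearMap7 k) (c := 1)
    (by rintro _ (rfl | rfl | rfl) <;> simp [diagMap7_stdBasis7]) hv

theorem diagMap7_of_mem_planeBeta7 (k : K) {v : Fin 7 → K} (hv : v ∈ planeBeta7 K) :
    diagMap7 k v = k ^ 2 • v :=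
  Module.End.apply_eq_smul_of_mem_span (f := diagLinearMap7 k)
    (by rintro _ (rfl | rfl | rfl) <;> simp [diagMap7_stdBasis7]) hv

theorem map_diagLinearMap7_planePi7_one {k : K} (hk : k ≠ 0) :
    (planePi7 (1 : K)).map (diagLinearMap7 k) = planePi7 k := by
  have hu : diagMap7 k ((1 : K)⁻¹ • stdBasis7 2 + stdBasis7 3 + (1 : K) • stdBasis7 4) =
      k • (k⁻¹ • stdBasis7 2 + stdBasis7 3 + k • stdBasis7 4) := by
    funext j
    fin_cases j <;> simp [diagMap7, stdBasis7, hk, sq]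
  rw [planePi7, planePi7, Submodule.map_span, Set.image_insert_eq, Set.image_insert_eq,
    Set.image_singleton, coe_diagLinearMap7, hu, diagMap7_stdBasis7, diagMap7_stdBasis7]
  simp only [Submodule.span_insert, Submodule.span_singleton_smul_eq (isUnit_iff_ne_zero.mpr hk)]
  norm_num [Submodule.span_singleton_smul_eq (isUnit_iff_ne_zero.mpr (pow_ne_zero 2 hk))]

theorem mem_planePi7_coord {k : K} (hk : k ≠ 0) {v : Fin 7 → K} (hv : v ∈ planePi7 k) :
    k * v 2 = v 3 ∧ v 4 = k * v 3 := by
  induction hv using Submodule.span_induction with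
  | mem x h =>
    rcases h with rfl | rfl | rfl <;> simp [stdBasis7, hk]
  | zero => simp
  | add x y _ _ hx hy =>
    exact ⟨by simp only [Pi.add_apply]; linear_combination hx.1 + hy.1,
      by simp only [Pi.add_apply]; linear_combination hx.2 + hy.2⟩
  | smul c x _ hx =>
    exact ⟨by simp only [Pi.smul_apply, smul_eq_mul]; linear_combination c * hx.1,
      by simp only [Pi.smul_apply, smul_eq_mul]; linear_combination c * hx.2⟩

/-- The linear map acting as `a` on `α`, as `b` on `β`, and sending `e₄` to `w`. -/
def alphaBetaMap7 (a b : K) (w x : Fin 7 → K) : Fin 7 → K :=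
  fun j => (if (j : ℕ) ≤ 2 then a else if (j : ℕ) = 3 then 0 else b) * x j + x 3 * w j

theorem apply_eq_alphaBetaMap7 (φ : (Fin 7 → K) →ₗ[K] (Fin 7 → K)) {a b : K}
    (hα : ∀ v ∈ planeAlpha7 K, φ v = a • v) (hβ : ∀ v ∈ planeBeta7 K, φ v = b • v)
    (x : Fin 7 → K) : φ x = alphaBetaMap7 a b (φ (stdBasis7 3)) x := by
  have hx : x = ∑ i, x i • stdBasis7 i := by
    funext j
    simp [stdBasis7, Pi.single_apply]
  conv_lhs => rw [hx]
  simp only [Fin.sum_univ_seven, map_add, map_smul]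
  rw [hα (stdBasis7 0) (Submodule.subset_span (by simp)),
    hα (stdBasis7 1) (Submodule.subset_span (by simp)),
    hα (stdBasis7 2) (Submodule.subset_span (by simp)),
    hβ (stdBasis7 4) (Submodule.subset_span (by simp)),
    hβ (stdBasis7 5) (Submodule.subset_span (by simp)),
    hβ (stdBasis7 6) (Submodule.subset_span (by simp))]
  funext j
  fin_cases j <;> simp [alphaBetaMap7, stdBasis7] <;> ring

/-- The test vectors are the isotropic `eᵢ + e₈₋ᵢ ± e₄` and `eᵢ + eⱼ + e₄ + e₈₋ᵢ`: the `±` pairs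
give `a w₈₋ᵢ + b wᵢ = 0` (this is where `2 ≠ 0` enters), the others give `a w₈₋ⱼ = 0`. -/
theorem exists_eq_smul_stdBasis7_three_of_isotropic (hchar : (2 : K) ≠ 0) {a b : K}
    (ha : a ≠ 0) (hb : b ≠ 0) {w : Fin 7 → K}
    (hq : ∀ x, parabolicQ7 x = 0 → parabolicQ7 (alphaBetaMap7 a b w x) = 0) :
    ∃ c : K, w = c • stdBasis7 3 := by
  have h1 := hq ![1, 0, 0, 1, 0, 0, 1] (by simp [parabolicQ7])
  have h2 := hq ![1, 0, 0, -1, 0, 0, 1] (by simp [parabolicQ7])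
  have h3 := hq ![0, 1, 0, 1, 0, 1, 0] (by simp [parabolicQ7])
  have h4 := hq ![0, 1, 0, -1, 0, 1, 0] (by simp [parabolicQ7])
  have h5 := hq ![0, 0, 1, 1, 1, 0, 0] (by simp [parabolicQ7])
  have h6 := hq ![0, 0, 1, -1, 1, 0, 0] (by simp [parabolicQ7])
  have h7 := hq ![1, 1, 0, 1, 0, 0, 1] (by simp [parabolicQ7])
  have h8 := hq ![1, 0, 1, 1, 0, 0, 1] (by simp [parabolicQ7])
  have h9 := hq ![1, 1, 0, 1, 0, 1, 0] (by simp [parabolicQ7])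
  simp only [parabolicQ7, alphaBetaMap7, Fin.isValue, Fin.coe_ofNat_eq_mod, Nat.zero_mod, zero_le,
    ↓reduceIte, Matrix.cons_val_zero, mul_one, Matrix.cons_val, one_mul, Nat.mod_succ,
    Nat.reduceLeDiff, OfNat.ofNat_eq_ofNat, Nat.reduceEqDiff, Nat.one_mod, Nat.one_le_ofNat,
    Matrix.cons_val_one, mul_zero, zero_add, Nat.reduceMod, Std.le_refl, Nat.succ_ne_self,
    neg_mul, mul_neg, neg_neg, neg_zero, even_two, Even.neg_pow] at h1 h2 h3 h4 h5 h6 h7 h8 h9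
  have hw5 : w 5 = 0 := mul_left_cancel₀ ha (by linear_combination h7 - h1 : a * w 5 = a * 0)
  have hw4 : w 4 = 0 := mul_left_cancel₀ ha (by linear_combination h8 - h1 : a * w 4 = a * 0)
  have hw6 : w 6 = 0 := mul_left_cancel₀ ha (by linear_combination h9 - h3 : a * w 6 = a * 0)
  have h2b : 2 * b ≠ 0 := mul_ne_zero hchar hb
  have hw0 : w 0 = 0 := mul_left_cancel₀ h2b
    (by linear_combination h1 - h2 - 2 * a * hw6 : 2 * b * w 0 = 2 * b * 0)
  have hw1 : w 1 = 0 := mul_left_cancel₀ h2b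
    (by linear_combination h3 - h4 - 2 * a * hw5 : 2 * b * w 1 = 2 * b * 0)
  have hw2 : w 2 = 0 := mul_left_cancel₀ h2b
    (by linear_combination h5 - h6 - 2 * a * hw4 : 2 * b * w 2 = 2 * b * 0)
  refine ⟨w 3, funext fun j => ?_⟩
  fin_cases j <;> simp [stdBasis7, hw0, hw1, hw2, hw4, hw5, hw6]

theorem alphaBetaMap7_eq_smul_diagMap7 {k : K} (hk : k ≠ 0) {a b c : K}
    (hu : alphaBetaMap7 a b (c • stdBasis7 3) (stdBasis7 2 + stdBasis7 3 + stdBasis7 4) ∈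
      planePi7 k)
    (x : Fin 7 → K) : alphaBetaMap7 a b (c • stdBasis7 3) x = a • diagMap7 k x := by
  obtain ⟨h1, h2⟩ := mem_planePi7_coord hk hu
  simp only [alphaBetaMap7, Fin.isValue, Fin.coe_ofNat_eq_mod, Nat.reduceMod, Std.le_refl,
    ↓reduceIte, stdBasis7, Pi.add_apply, Pi.single_eq_same, ne_eq, Fin.reduceEq, not_false_eq_true,
    Pi.single_eq_of_ne, add_zero, mul_one, zero_add, Pi.smul_apply, smul_eq_mul, mul_zero,
    Nat.reduceLeDiff, one_mul, Nat.succ_ne_self] at h1 h2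
  funext j
  fin_cases j <;> simp [alphaBetaMap7, diagMap7, stdBasis7, ← h1, h2] <;> ring

end ParabolicQuadric7

open ParabolicQuadric7

/-- For `char K ≠ 2` and `k ≠ 0`: the diagonal map
`d_k = diag(1,1,1,k,k²,k²,k²)` is a similitude of `q` with factor `k²` (so it preserves the
quadric), it fixes `α` vectorwise, multiplies `β` by `k²` and carries `π₁` to `π_k`; and any
linear automorphism preserving the quadric, fixing `α` and `β` projectively pointwise and
carrying `π₁` to `π_k` equals `c·d_k` for some nonzero scalar `c`. -/
theorem homology_of_parabolic_quadric_unique_up_to_scalar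
    {K : Type*} [Field K] (hchar : (2 : K) ≠ 0) (k : K) (hk : k ≠ 0) :
    (∀ x : Fin 7 → K, parabolicQ7 (diagMap7 k x) = k ^ 2 * parabolicQ7 x) ∧
    (∀ v ∈ planeAlpha7 K, diagMap7 k v = v) ∧
    (∀ v ∈ planeBeta7 K, diagMap7 k v = (k ^ 2) • v) ∧
    (diagMap7 k '' (planePi7 (1 : K) : Set (Fin 7 → K)) = (planePi7 k : Set (Fin 7 → K))) ∧
    (∀ φ : (Fin 7 → K) ≃ₗ[K] (Fin 7 → K),
      (∀ x : Fin 7 → K, parabolicQ7 x = 0 ↔ parabolicQ7 (φ x) = 0) →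
      (∀ v : Fin 7 → K, (v ∈ planeAlpha7 K ∨ v ∈ planeBeta7 K) → ∃ a : K, φ v = a • v) →
      (φ '' (planePi7 (1 : K) : Set (Fin 7 → K)) = (planePi7 k : Set (Fin 7 → K))) →
      ∃ c : K, c ≠ 0 ∧ ∀ x : Fin 7 → K, φ x = c • diagMap7 k x) := by
  refine ⟨parabolicQ7_diagMap7 k, fun v => diagMap7_of_mem_planeAlpha7 k,
    fun v => diagMap7_of_mem_planeBeta7 k, ?_, fun φ hq heig hpi => ?_⟩
  · rw [← coe_diagLinearMap7, ← Submodule.map_coe, map_diagLinearMap7_planePi7_one hk]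
  obtain ⟨a, hα⟩ := φ.toLinearMap.exists_eq_smul_on_of_forall_exists_eq_smul _
    fun v hv => heig v (.inl hv)
  obtain ⟨b, hβ⟩ := φ.toLinearMap.exists_eq_smul_on_of_forall_exists_eq_smul _
    fun v hv => heig v (.inr hv)
  have ha : a ≠ 0 := φ.ne_zero_of_apply_eq_smul (by simp [stdBasis7])
    (hα (stdBasis7 0) (Submodule.subset_span (by simp)))
  have hb : b ≠ 0 := φ.ne_zero_of_apply_eq_smul (by simp [stdBasis7])
    (hβ (stdBasis7 4) (Submodule.subset_span (by simp)))
  have hφ : ∀ x, φ x = alphaBetaMap7 a b (φ (stdBasis7 3)) x :=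
    apply_eq_alphaBetaMap7 φ.toLinearMap hα hβ
  obtain ⟨c, hc⟩ := exists_eq_smul_stdBasis7_three_of_isotropic hchar ha hb
    fun x hx => hφ x ▸ (hq x).mp hx
  rw [hc] at hφ
  refine ⟨a, ha, fun x => (hφ x).trans (alphaBetaMap7_eq_smul_diagMap7 hk ?_ x)⟩
  rw [← hφ, ← SetLike.mem_coe, ← hpi]
  exact Set.mem_image_of_mem φ (Submodule.subset_span (by simp))
end
end

section
/- Let L be a division ring and σ : L → L an involution (an additive bijection with σ(ab) = σ(b)σ(a) and σ(σ(a)) = a for all a, b ∈ L). Let V be a right L-vector space and g : V × V → L a (σ,1)-linear form, i.e., additive in each argument with g(v·a, w·b) = σ(a)·g(v,w)·b for all a, b ∈ L and v, w ∈ V. Define the norm set N := { (g(w,w) + u − σ(u)) · (g(v,v) + t − σ(t)) + g(w,v) + σ(g(v,w)) + 1 | v, w ∈ V, t, u ∈ L }. Then N is closed under conjugation by every nonzero element of L: for every r ∈ L with r ≠ 0 and every x ∈ N, also r⁻¹·x·r ∈ N. -/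
/-!
Conjugation by `r` is realised inside the norm set by rescaling the parameters: replace
`v, w, t, u` by `v·r`, `w·s`, `σ(r) t r`, `σ(s) u s` with `s = σ(r⁻¹)`. The
`(σ,1)`-linearity of `g` turns the two factors into `σ(s)·(−)·s` and `σ(r)·(−)·r`, and the
cross terms into `r⁻¹·(−)·r`; since `s·σ(r) = σ(r·r⁻¹) = 1`, the middle cancels.
-/

open MulOpposite

section AntiInvolution

variable {M : Type*} {σ : M → M}

theorem map_one_of_antimul_involutive [MulOneClass M]
    (hσmul : ∀ a b : M, σ (a * b) = σ b * σ a) (hσinv : ∀ a : M, σ (σ a) = a) : σ 1 = 1 := by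
  simpa [hσinv] using (hσmul (σ 1) 1).symm

theorem map_sandwich [Semigroup M]
    (hσmul : ∀ a b : M, σ (a * b) = σ b * σ a) (hσinv : ∀ a : M, σ (σ a) = a) (a u : M) :
    σ (σ a * u * a) = σ a * σ u * a := by
  rw [hσmul, hσmul, hσinv, mul_assoc]

end AntiInvolution

section NormSet

variable {L V : Type*} [Ring L] [AddCommGroup V] [Module Lᵐᵒᵖ V] {σ : L → L} (g : V → V → L)

variable (σ) in
def normSetElem (v w : V) (t u : L) : L :=
  (g w w + u - σ u) * (g v v + t - σ t) + g w v + σ (g v w) + 1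

theorem diag_add_sub_smul
    (hσmul : ∀ a b : L, σ (a * b) = σ b * σ a) (hσinv : ∀ a : L, σ (σ a) = a)
    (hgsmul : ∀ (a b : L) (v w : V), g (op a • v) (op b • w) = σ a * g v w * b)
    (a u : L) (w : V) :
    g (op a • w) (op a • w) + σ a * u * a - σ (σ a * u * a) = σ a * (g w w + u - σ u) * a := by
  rw [hgsmul, map_sandwich hσmul hσinv]
  noncomm_ring

theorem units_inv_mul_normSetElem_mul
    (hσmul : ∀ a b : L, σ (a * b) = σ b * σ a) (hσinv : ∀ a : L, σ (σ a) = a)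
    (hgsmul : ∀ (a b : L) (v w : V), g (op a • v) (op b • w) = σ a * g v w * b)
    (r : Lˣ) (v w : V) (t u : L) :
    ↑r⁻¹ * normSetElem σ g v w t u * r =
      normSetElem σ g (op (r : L) • v) (op (σ ↑r⁻¹) • w)
        (σ r * t * r) (σ (σ ↑r⁻¹) * u * σ ↑r⁻¹) := by
  set s := σ ↑r⁻¹
  have hσs : σ s = ↑r⁻¹ := hσinv _
  have hsr : s * σ r = 1 := by
    rw [← hσmul, r.mul_inv, map_one_of_antimul_involutive hσmul hσinv]
  have hcross : σ (σ r * g v w * s) = σ s * σ (g v w) * r := by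
    rw [hσmul, hσmul, hσinv (r : L), mul_assoc]
  simp only [normSetElem]
  rw [diag_add_sub_smul g hσmul hσinv hgsmul, diag_add_sub_smul g hσmul hσinv hgsmul,
    hgsmul, hgsmul, hcross, hσs]
  calc ↑r⁻¹ * ((g w w + u - σ u) * (g v v + t - σ t) + g w v + σ (g v w) + 1) * ↑r
      = ↑r⁻¹ * (g w w + u - σ u) * (s * σ r) * (g v v + t - σ t) * r + ↑r⁻¹ * g w v * r
          + ↑r⁻¹ * σ (g v w) * r + ↑r⁻¹ * r := by
        rw [hsr]; noncomm_ring
    _ = _ := by rw [r.inv_mul]; noncomm_ring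

end NormSet

theorem norm_set_closed_under_conjugation_general
    {L V : Type*} [DivisionRing L] [AddCommGroup V] [Module Lᵐᵒᵖ V]
    (σ : L → L)
    (hσmul : ∀ a b : L, σ (a * b) = σ b * σ a)
    (hσinv : ∀ a : L, σ (σ a) = a)
    (g : V → V → L)
    (hgsmul : ∀ (a b : L) (v w : V),
      g (MulOpposite.op a • v) (MulOpposite.op b • w) = σ a * g v w * b)
    (N : Set L)
    (hN : N = {x : L | ∃ (v w : V) (t u : L),
      x = (g w w + u - σ u) * (g v v + t - σ t) + g w v + σ (g v w) + 1}) :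
    ∀ r : L, r ≠ 0 → ∀ x ∈ N, r⁻¹ * x * r ∈ N := by
  rintro r hr x hx
  subst hN
  obtain ⟨v, w, t, u, rfl⟩ := hx
  have hconj := units_inv_mul_normSetElem_mul g hσmul hσinv hgsmul (Units.mk0 r hr) v w t u
  simp only [Units.val_inv_eq_inv_val, Units.val_mk0] at hconj
  exact ⟨_, _, _, _, hconj⟩

/-- Let `L` be a division ring with involution `σ`, `V` a right
`L`-vector space, and `g : V × V → L` a `(σ,1)`-linear form.  The norm set
`N = {(g(w,w)+u−σ(u))·(g(v,v)+t−σ(t)) + g(w,v) + σ(g(v,w)) + 1}` is closed under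
conjugation by every nonzero element of `L`. -/
theorem norm_set_closed_under_conjugation
    {L V : Type*} [DivisionRing L] [AddCommGroup V] [Module Lᵐᵒᵖ V]
    (σ : L → L)
    (hσadd : ∀ a b : L, σ (a + b) = σ a + σ b)
    (hσmul : ∀ a b : L, σ (a * b) = σ b * σ a)
    (hσinv : ∀ a : L, σ (σ a) = a)
    (g : V → V → L)
    (hgaddl : ∀ v v' w : V, g (v + v') w = g v w + g v' w)
    (hgaddr : ∀ v w w' : V, g v (w + w') = g v w + g v w')
    (hgsmul : ∀ (a b : L) (v w : V),
      g (MulOpposite.op a • v) (MulOpposite.op b • w) = σ a * g v w * b)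
    (N : Set L)
    (hN : N = {x : L | ∃ (v w : V) (t u : L),
      x = (g w w + u - σ u) * (g v v + t - σ t) + g w v + σ (g v w) + 1}) :
    ∀ r : L, r ≠ 0 → ∀ x ∈ N, r⁻¹ * x * r ∈ N :=
  norm_set_closed_under_conjugation_general σ hσmul hσinv g hgsmul N hN
end

section
/- Let L be a division ring, σ : L → L an involution, V₀ a right L-vector space, and g₀ : V₀ × V₀ → L a (σ,1)-linear form; set f₀(v,w) := g₀(v,w) + σ(g₀(w,v)). Let W := L × L × V₀ × L × L as a right L-vector space, with coordinates written (x₋₂, x₋₁, v, x₁, x₂), basis vectors e₋₂ := (1,0,0,0,0), e₋₁ := (0,1,0,0,0), e₁ := (0,0,0,1,0), e₂ := (0,0,0,0,1), and σ-sesquilinear form f((x₋₂,x₋₁,v,x₁,x₂),(y₋₂,y₋₁,w,y₁,y₂)) := σ(x₋₂)y₂ + σ(x₂)y₋₂ + σ(x₋₁)y₁ + σ(x₁)y₋₁ + f₀(v,w). For a subspace S of W put S^⊥ := {w ∈ W | f(s,w) = 0 for all s ∈ S}. Fix v₀, w₀ ∈ V₀ and t, u ∈ L, and set g₁ := g₀(v₀,v₀)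 + t − σ(t), g₂ := g₀(w₀,w₀) + u − σ(u), and D := g₂·g₁ + f₀(w₀,v₀) + 1; assume D ≠ 0. Define the subspaces M₁ := span(e₋₂, e₋₁), M₂ := span(e₁, e₂), M₃ := span(e₁·g₁ + (0,0,v₀,0,0) + e₋₁, e₋₂), M₄ := span(e₋₁·σ(g₂) + (0,0,w₀,0,0) + e₁, e₂). Then for every x ∈ L, the fourfold perspectivity chain of perps yields ((((span(e₋₂ + e₋₁·x))^⊥ ∩ M₂)^⊥ ∩ M₃)^⊥ ∩ M₄)^⊥ ∩ M₁ = span(e₋₂ + e₋₁·(D·x)). In other words, the self-projectivity M₁ ⋏ M₂ ⋏ M₃ ⋏ M₄ ⋏ M₁ acts on the line ⟨e₋₂, e₋₁⟩ as the homology x ↦ D·x. -/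
/-!
If `f p m = 1`, the vectors of `span {m, n}` orthogonal to `p` form the point
`span {n - m · f p n}`. Each of the four perspectivities is an instance of this, and the point
`e₋₂ + e₋₁ x` travels through `e₁ - e₂ σ(x)`, `e₋₂ + (e₋₁ + v₀ + e₁ g₁) x`,
`e₋₁ σ(g₂) + w₀ + e₁ - e₂ σ(x) σ(D)` back to `e₋₂ + e₋₁ D x`. The factor `σ(D)` appears in the
third step because the trace form satisfies `σ (f₀ w₀ v₀) = f₀ v₀ w₀`.
-/

open MulOpposite Submodule

section Development

variable {L : Type*} [DivisionRing L]

theorem map_one_of_antimul_of_involutive {σ : L → L} (hmul : ∀ a b, σ (a * b) = σ b * σ a)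
    (hinv : ∀ a, σ (σ a) = a) : σ 1 = 1 := by
  have h := hmul (σ 1) 1
  rw [mul_one, hinv, mul_one] at h
  exact h.symm

section Form

variable {V : Type*} [AddCommGroup V] [Module Lᵐᵒᵖ V]

structure IsSesquilinear (σ : L → L) (b : V → V → L) : Prop where
  add_left : ∀ v v' w, b (v + v') w = b v w + b v' w
  add_right : ∀ v w w', b v (w + w') = b v w + b v w'
  smul_left : ∀ (a : L) v w, b (op a • v) w = σ a * b v w
  smul_right : ∀ (a : L) v w, b v (op a • w) = b v w * a

variable {σ : L → L} {b : V → V → L}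

namespace IsSesquilinear

theorem of_smul_smul (hσ1 : σ 1 = 1)
    (hadd_left : ∀ v v' w, b (v + v') w = b v w + b v' w)
    (hadd_right : ∀ v w w', b v (w + w') = b v w + b v w')
    (hsmul : ∀ (a c : L) v w, b (op a • v) (op c • w) = σ a * b v w * c) :
    IsSesquilinear σ b where
  add_left := hadd_left
  add_right := hadd_right
  smul_left a v w := by simpa using hsmul a 1 v w
  smul_right a v w := by simpa [hσ1] using hsmul 1 a v w

theorem zero_left (hb : IsSesquilinear σ b) (w : V) : b 0 w = 0 := by
  simpa using hb.add_left 0 0 w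

theorem zero_right (hb : IsSesquilinear σ b) (v : V) : b v 0 = 0 := by
  simpa using hb.add_right v 0 0

theorem add_flip (hσadd : ∀ a c, σ (a + c) = σ a + σ c) (hσmul : ∀ a c, σ (a * c) = σ c * σ a)
    (hσinv : ∀ a, σ (σ a) = a) (hb : IsSesquilinear σ b) :
    IsSesquilinear σ (fun v w => b v w + σ (b w v)) where
  add_left v v' w := by
    simp only [hb.add_left, hb.add_right, hσadd]; abel
  add_right v w w' := by
    simp only [hb.add_left, hb.add_right, hσadd]; abel
  smul_left a v w := by
    simp only [hb.smul_left, hb.smul_right, hσmul, mul_add]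
  smul_right a v w := by
    simp only [hb.smul_left, hb.smul_right, hσmul, hσinv, add_mul]

end IsSesquilinear

/-- The orthogonal sum of `b` with the hyperbolic planes `⟨e₋₂, e₂⟩` and `⟨e₋₁, e₁⟩`, in the
coordinates `(x₋₂, x₋₁, v, x₁, x₂)`. -/
def hyperbolicExtension (σ : L → L) (b : V → V → L) (p q : L × L × V × L × L) : L :=
  σ p.1 * q.2.2.2.2 + σ p.2.2.2.2 * q.1 + σ p.2.1 * q.2.2.2.1 + σ p.2.2.2.1 * q.2.1 +
    b p.2.2.1 q.2.2.1

theorem IsSesquilinear.hyperbolicExtension (hσadd : ∀ a c, σ (a + c) = σ a + σ c)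
    (hσmul : ∀ a c, σ (a * c) = σ c * σ a) (hb : IsSesquilinear σ b) :
    IsSesquilinear σ (hyperbolicExtension σ b) where
  add_left p p' q := by
    simp only [_root_.hyperbolicExtension, Prod.fst_add, Prod.snd_add, hσadd, hb.add_left, add_mul]
    abel
  add_right p q q' := by
    simp only [_root_.hyperbolicExtension, Prod.fst_add, Prod.snd_add, hb.add_right, mul_add]
    abel
  smul_left a p q := by
    simp only [_root_.hyperbolicExtension, Prod.smul_fst, Prod.smul_snd, op_smul_eq_mul, hσmul,
      hb.smul_left, mul_add, mul_assoc]
  smul_right a p q := by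
    simp only [_root_.hyperbolicExtension, Prod.smul_fst, Prod.smul_snd, op_smul_eq_mul,
      hb.smul_right, add_mul, mul_assoc]

end Form

section Orthogonal

variable {W : Type*} [AddCommGroup W] [Module Lᵐᵒᵖ W]

def rightOrthogonal (b : W → W → L) (S : Set W) : Set W := {w | ∀ s ∈ S, b s w = 0}

theorem coe_span_singleton_eq (p : W) :
    (span Lᵐᵒᵖ {p} : Set W) = {q | ∃ a : L, q = op a • p} := by
  ext q
  simp [mem_span_singleton, op_surjective.exists, eq_comm]

theorem coe_span_pair_eq (m n : W) :
    (span Lᵐᵒᵖ {m, n} : Set W) = {q | ∃ a c : L, q = op a • m + op c • n} := by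
  ext q
  simp [mem_span_pair, op_surjective.exists, eq_comm]

theorem rightOrthogonal_span_singleton_inter_span_pair {σ : L → L} {b : W → W → L}
    (hb : IsSesquilinear σ b) {p m n r : W} (hpm : b p m = 1) (hr : n - op (b p n) • m = r) :
    rightOrthogonal b (span Lᵐᵒᵖ {p}) ∩ span Lᵐᵒᵖ {m, n} = (span Lᵐᵒᵖ {r} : Set W) := by
  have hcomb : ∀ c : L, op c • r = op (-(b p n * c)) • m + op c • n := fun c => by
    rw [← hr, smul_sub, smul_smul, ← op_mul, op_neg, neg_smul]; abel
  have hval : ∀ a c : L, b p (op a • m + op c • n) = a + b p n * c := fun a c => by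
    rw [hb.add_right, hb.smul_right, hb.smul_right, hpm, one_mul]
  ext w
  simp only [rightOrthogonal, Set.mem_inter_iff, Set.mem_ofPred_eq, SetLike.mem_coe, mem_span_pair,
    coe_span_singleton_eq, op_surjective.exists, forall_exists_index, forall_eq_apply_imp_iff]
  constructor
  · rintro ⟨hw, a, c, rfl⟩
    have ha : a = -(b p n * c) := eq_neg_of_add_eq_zero_left (by simpa [hval] using hw 1)
    exact ⟨c, by rw [hcomb, ha]⟩
  · rintro ⟨c, rfl⟩
    refine ⟨fun a => ?_, _, c, (hcomb c).symm⟩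
    rw [hcomb, hb.smul_left, hval, neg_add_cancel, mul_zero]

end Orthogonal

section Chain

variable {V : Type*} [AddCommGroup V] [Module Lᵐᵒᵖ V] {σ : L → L} {b : V → V → L}

local notation "W" => L × L × V × L × L

theorem rightOrthogonal_hyperbolicExtension_chain (hσadd : ∀ a c, σ (a + c) = σ a + σ c)
    (hσmul : ∀ a c, σ (a * c) = σ c * σ a) (hσinv : ∀ a, σ (σ a) = a)
    (hb : IsSesquilinear σ b) {v₀ w₀ : V} (hb_flip : σ (b w₀ v₀) = b v₀ w₀) (g₁ g₂ x : L) :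
    rightOrthogonal (hyperbolicExtension σ b) (rightOrthogonal (hyperbolicExtension σ b)
      (rightOrthogonal (hyperbolicExtension σ b) (rightOrthogonal (hyperbolicExtension σ b)
        (span Lᵐᵒᵖ {((1, x, 0, 0, 0) : W)}) ∩
          span Lᵐᵒᵖ {((0, 0, 0, 0, 1) : W), (0, 0, 0, 1, 0)}) ∩
        span Lᵐᵒᵖ {((0, 1, v₀, g₁, 0) : W), (1, 0, 0, 0, 0)}) ∩
      span Lᵐᵒᵖ {((0, 0, 0, 0, 1) : W), (0, σ g₂, w₀, 1, 0)}) ∩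
    span Lᵐᵒᵖ {((0, 1, 0, 0, 0) : W), (1, 0, 0, 0, 0)} =
      (span Lᵐᵒᵖ {((1, (g₂ * g₁ + b w₀ v₀ + 1) * x, 0, 0, 0) : W)} : Set W) := by
  have hσ1 : σ 1 = 1 := map_one_of_antimul_of_involutive hσmul hσinv
  have hσ0 : σ 0 = 0 := (AddMonoidHom.mk' σ hσadd).map_zero
  have hσneg : ∀ a, σ (-a) = -σ a := (AddMonoidHom.mk' σ hσadd).map_neg
  set D := g₂ * g₁ + b w₀ v₀ + 1
  have hσD : σ D = σ g₁ * σ g₂ + b v₀ w₀ + 1 := by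
    rw [hσadd, hσadd, hσmul, hσ1, hb_flip]
  have hB := hb.hyperbolicExtension hσadd hσmul
  rw [rightOrthogonal_span_singleton_inter_span_pair hB (r := (0, 0, 0, 1, -σ x))
      (by simp [hyperbolicExtension, hσ0, hσ1, hb.zero_left])
      (by simp [hyperbolicExtension, hσ0, hσ1, hb.zero_left]),
    rightOrthogonal_span_singleton_inter_span_pair hB (r := (1, x, op x • v₀, g₁ * x, 0))
      (by simp [hyperbolicExtension, hσ0, hσ1, hb.zero_left])
      (by simp [hyperbolicExtension, hσ0, hσ1, hσneg, hσinv, hb.zero_left]),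
    rightOrthogonal_span_singleton_inter_span_pair hB (r := (0, σ g₂, w₀, 1, -(σ x * σ D)))
      (by simp [hyperbolicExtension, hσ0, hσ1, hb.zero_right])
      (by simp [hyperbolicExtension, hσ0, hσ1, hσmul, hb.smul_left, hσD]; noncomm_ring),
    rightOrthogonal_span_singleton_inter_span_pair hB (r := (1, D * x, 0, 0, 0))
      (by simp [hyperbolicExtension, hσ0, hσ1, hb.zero_right])
      (by simp [hyperbolicExtension, hσ0, hσ1, hσneg, hσmul, hσinv, hb.zero_right, Prod.ext_iff])]

end Chain

end Development

theorem projectivity_of_maximal_singular_subspace_is_homology_with_factor_D_general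
    {L V₀ : Type*} [DivisionRing L] [AddCommGroup V₀] [Module Lᵐᵒᵖ V₀]
    (σ : L → L)
    (hσadd : ∀ a b : L, σ (a + b) = σ a + σ b)
    (hσmul : ∀ a b : L, σ (a * b) = σ b * σ a)
    (hσinv : ∀ a : L, σ (σ a) = a)
    (g₀ : V₀ → V₀ → L)
    (hg₀addl : ∀ v v' w : V₀, g₀ (v + v') w = g₀ v w + g₀ v' w)
    (hg₀addr : ∀ v w w' : V₀, g₀ v (w + w') = g₀ v w + g₀ v w')
    (hg₀smul : ∀ (a b : L) (v w : V₀),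
      g₀ (MulOpposite.op a • v) (MulOpposite.op b • w) = σ a * g₀ v w * b)
    (f₀ : V₀ → V₀ → L) (hf₀ : ∀ v w : V₀, f₀ v w = g₀ v w + σ (g₀ w v))
    -- the σ-sesquilinear form on W = L × L × V₀ × L × L, coordinates (x₋₂, x₋₁, v, x₁, x₂)
    (f : (L × L × V₀ × L × L) → (L × L × V₀ × L × L) → L)
    (hf : ∀ p q : L × L × V₀ × L × L,
      f p q = σ p.1 * q.2.2.2.2 + σ p.2.2.2.2 * q.1 + σ p.2.1 * q.2.2.2.1 +
        σ p.2.2.2.1 * q.2.1 + f₀ p.2.2.1 q.2.2.1)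
    -- perp with respect to f
    (perp : Set (L × L × V₀ × L × L) → Set (L × L × V₀ × L × L))
    (hperp : ∀ S : Set (L × L × V₀ × L × L), perp S = {w | ∀ s ∈ S, f s w = 0})
    (v₀ w₀ : V₀)
    (g₁ g₂ D : L)
    (hD : D = g₂ * g₁ + f₀ w₀ v₀ + 1)
    -- the four maximal singular subspaces, given as sets of right linear combinations:
    -- M₁ = span(e₋₂, e₋₁), M₂ = span(e₁, e₂),
    -- M₃ = span(e₁·g₁ + v₀ + e₋₁, e₋₂), M₄ = span(e₋₁·σ(g₂) + w₀ + e₁, e₂)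
    (M₁ M₂ M₃ M₄ : Set (L × L × V₀ × L × L))
    (hM₁ : M₁ = {p | ∃ a b : L, p = (a, b, 0, 0, 0)})
    (hM₂ : M₂ = {p | ∃ a b : L, p = (0, 0, 0, a, b)})
    (hM₃ : M₃ = {p | ∃ a b : L, p = (b, a, MulOpposite.op a • v₀, g₁ * a, 0)})
    (hM₄ : M₄ = {p | ∃ a b : L, p = (0, σ g₂ * a, MulOpposite.op a • w₀, a, b)})
    (x : L)
    -- the point span(e₋₂ + e₋₁·x) of M₁
    (Px : Set (L × L × V₀ × L × L))
    (hPx : Px = {p | ∃ a : L, p = (a, x * a, 0, 0, 0)}) :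
    perp (perp (perp (perp Px ∩ M₂) ∩ M₃) ∩ M₄) ∩ M₁
      = {p : L × L × V₀ × L × L | ∃ a : L, p = (a, (D * x) * a, 0, 0, 0)} := by
  have hσ1 : σ 1 = 1 := map_one_of_antimul_of_involutive hσmul hσinv
  have hf₀_flip : σ (f₀ w₀ v₀) = f₀ v₀ w₀ := by rw [hf₀, hf₀, hσadd, hσinv, add_comm]
  have hF₀ : IsSesquilinear σ f₀ := (funext₂ hf₀ : f₀ = _) ▸
    (IsSesquilinear.of_smul_smul hσ1 hg₀addl hg₀addr hg₀smul).add_flip hσadd hσmul hσinv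
  obtain rfl : f = hyperbolicExtension σ f₀ := funext₂ hf
  obtain rfl : perp = rightOrthogonal (hyperbolicExtension σ f₀) := funext hperp
  have hPx' : Px = span Lᵐᵒᵖ {((1, x, 0, 0, 0) : L × L × V₀ × L × L)} := by
    rw [hPx, coe_span_singleton_eq]; simp
  have hM₁' : M₁ = span Lᵐᵒᵖ {((0, 1, 0, 0, 0) : L × L × V₀ × L × L), (1, 0, 0, 0, 0)} := by
    rw [hM₁, Set.pair_comm, coe_span_pair_eq]; simp
  have hM₂' : M₂ = span Lᵐᵒᵖ {((0, 0, 0, 0, 1) : L × L × V₀ × L × L), (0, 0, 0, 1, 0)} := by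
    rw [hM₂, Set.pair_comm, coe_span_pair_eq]; simp
  have hM₃' : M₃ = span Lᵐᵒᵖ {((0, 1, v₀, g₁, 0) : L × L × V₀ × L × L), (1, 0, 0, 0, 0)} := by
    rw [hM₃, coe_span_pair_eq]; simp
  have hM₄' : M₄ = span Lᵐᵒᵖ {((0, 0, 0, 0, 1) : L × L × V₀ × L × L), (0, σ g₂, w₀, 1, 0)} := by
    rw [hM₄, Set.pair_comm, coe_span_pair_eq]; simp
  rw [hPx', hM₁', hM₂', hM₃', hM₄', hD,
    rightOrthogonal_hyperbolicExtension_chain hσadd hσmul hσinv hF₀ hf₀_flip, coe_span_singleton_eq]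
  simp

/-- In the right `L`-vector space `W = L × L × V₀ × L × L` equipped with
the `σ`-sesquilinear form `f`, the fourfold chain of perps along the maximal singular
subspaces `M₁, M₂, M₃, M₄` carries the point `⟨e₋₂ + e₋₁·x⟩` of the line `⟨e₋₂, e₋₁⟩` to the
point `⟨e₋₂ + e₋₁·(D·x)⟩`, i.e. the self-projectivity `M₁ ⋏ M₂ ⋏ M₃ ⋏ M₄ ⋏ M₁` acts on
`⟨e₋₂, e₋₁⟩` as the homology `x ↦ D·x`. -/
theorem projectivity_of_maximal_singular_subspace_is_homology_with_factor_D
    {L V₀ : Type*} [DivisionRing L] [AddCommGroup V₀] [Module Lᵐᵒᵖ V₀]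
    (σ : L → L)
    (hσadd : ∀ a b : L, σ (a + b) = σ a + σ b)
    (hσmul : ∀ a b : L, σ (a * b) = σ b * σ a)
    (hσinv : ∀ a : L, σ (σ a) = a)
    (g₀ : V₀ → V₀ → L)
    (hg₀addl : ∀ v v' w : V₀, g₀ (v + v') w = g₀ v w + g₀ v' w)
    (hg₀addr : ∀ v w w' : V₀, g₀ v (w + w') = g₀ v w + g₀ v w')
    (hg₀smul : ∀ (a b : L) (v w : V₀),
      g₀ (MulOpposite.op a • v) (MulOpposite.op b • w) = σ a * g₀ v w * b)
    (f₀ : V₀ → V₀ → L) (hf₀ : ∀ v w : V₀, f₀ v w = g₀ v w + σ (g₀ w v))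
    -- the σ-sesquilinear form on W = L × L × V₀ × L × L, coordinates (x₋₂, x₋₁, v, x₁, x₂)
    (f : (L × L × V₀ × L × L) → (L × L × V₀ × L × L) → L)
    (hf : ∀ p q : L × L × V₀ × L × L,
      f p q = σ p.1 * q.2.2.2.2 + σ p.2.2.2.2 * q.1 + σ p.2.1 * q.2.2.2.1 +
        σ p.2.2.2.1 * q.2.1 + f₀ p.2.2.1 q.2.2.1)
    -- perp with respect to f
    (perp : Set (L × L × V₀ × L × L) → Set (L × L × V₀ × L × L))
    (hperp : ∀ S : Set (L × L × V₀ × L × L), perp S = {w | ∀ s ∈ S, f s w = 0})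
    (v₀ w₀ : V₀) (t u : L)
    (g₁ g₂ D : L)
    (hg₁ : g₁ = g₀ v₀ v₀ + t - σ t)
    (hg₂ : g₂ = g₀ w₀ w₀ + u - σ u)
    (hD : D = g₂ * g₁ + f₀ w₀ v₀ + 1)
    (hD0 : D ≠ 0)
    -- the four maximal singular subspaces, given as sets of right linear combinations:
    -- M₁ = span(e₋₂, e₋₁), M₂ = span(e₁, e₂),
    -- M₃ = span(e₁·g₁ + v₀ + e₋₁, e₋₂), M₄ = span(e₋₁·σ(g₂) + w₀ + e₁, e₂)
    (M₁ M₂ M₃ M₄ : Set (L × L × V₀ × L × L))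
    (hM₁ : M₁ = {p | ∃ a b : L, p = (a, b, 0, 0, 0)})
    (hM₂ : M₂ = {p | ∃ a b : L, p = (0, 0, 0, a, b)})
    (hM₃ : M₃ = {p | ∃ a b : L, p = (b, a, MulOpposite.op a • v₀, g₁ * a, 0)})
    (hM₄ : M₄ = {p | ∃ a b : L, p = (0, σ g₂ * a, MulOpposite.op a • w₀, a, b)})
    (x : L)
    -- the point span(e₋₂ + e₋₁·x) of M₁
    (Px : Set (L × L × V₀ × L × L))
    (hPx : Px = {p | ∃ a : L, p = (a, x * a, 0, 0, 0)}) :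
    perp (perp (perp (perp Px ∩ M₂) ∩ M₃) ∩ M₄) ∩ M₁
      = {p : L × L × V₀ × L × L | ∃ a : L, p = (a, (D * x) * a, 0, 0, 0)} :=
  projectivity_of_maximal_singular_subspace_is_homology_with_factor_D_general σ hσadd hσmul hσinv g₀
    hg₀addl hg₀addr hg₀smul f₀ hf₀ f hf perp hperp v₀ w₀ g₁ g₂ D hD M₁ M₂ M₃ M₄ hM₁ hM₂ hM₃ hM₄ x Px
    hPx
end

section
/- Let K be a field, V a K-vector space, and Q : V → K a quadratic form whose polar form B is nondegenerate. Let m ≥ 2 be a natural number. Let U₁, U₂, U₃ be totally singular subspaces of V of dimension m, and W₁, W₂ totally singular subspaces of dimension m+1 with U₁ ≤ W₁ and U₂ ≤ W₂. Assume: dim(W₁ ∩ W₂) = 1; dim(U₃ ∩ (U₁ + U₂)) = m − 1; U₁ ∩ U₂^⊥ = {0} (U₁ and U₂ are opposite); U₃ ∩ U₁^⊥ = {0} and U₃ ∩ U₂^⊥ = {0} (U₃ is opposite U₁ and U₂); and U₃ is not contained in (W₁ ∩ W₂)^⊥ (the point W₁ ∩ W₂ is not collinear with all of U₃). Then (U₃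 + (W₂ ∩ U₃^⊥)) ∩ W₁ ≠ {0} if and only if m is even. (Equivalently: the image of W₂ under the upper projectivity U₂ ⋏ U₃ ⋏ U₁ equals W₁ if and only if the projective dimension m − 1 of the Uᵢ is odd.) -/
/-- A subspace is totally singular for `Q` if `Q` vanishes identically on it. -/
def IsTotallySingular {K V : Type*} [Field K] [AddCommGroup V] [Module K V]
    (Q : QuadraticForm K V) (S : Submodule K V) : Prop :=
  ∀ v ∈ S, Q v = 0

open Module Submodule

section

variable {K V : Type*} [Field K] [AddCommGroup V] [Module K V]

namespace Submodule

theorem finrank_sup_span_singleton_of_notMem {A : Submodule K V} [FiniteDimensional K A] {w : V}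
    (hw : w ∉ A) : finrank K ↥(A ⊔ K ∙ w) = finrank K A + 1 := by
  have hw0 : w ≠ 0 := fun h ↦ hw (h ▸ A.zero_mem)
  have h := finrank_sup_add_finrank_inf_eq A (K ∙ w)
  rwa [(disjoint_span_singleton_of_notMem hw).eq_bot, finrank_bot, add_zero,
    finrank_span_singleton hw0] at h

theorem eq_sup_span_singleton_of_finrank_le {A B : Submodule K V} [FiniteDimensional K B] {w : V}
    (hAB : A ≤ B) (hwB : w ∈ B) (hwA : w ∉ A) (hrank : finrank K B ≤ finrank K A + 1) :
    B = A ⊔ K ∙ w := by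
  have : FiniteDimensional K A := finiteDimensional_of_le hAB
  refine (eq_of_le_of_finrank_le (sup_le hAB ((span_singleton_le_iff_mem _ _).2 hwB)) ?_).symm
  rwa [finrank_sup_span_singleton_of_notMem hwA]

theorem inf_ker_sup_span_singleton_eq {H : Submodule K V} {f : V →ₗ[K] K} {y : V} (hy : y ∈ H)
    (hfy : f y ≠ 0) : H ⊓ LinearMap.ker f ⊔ K ∙ y = H := by
  refine le_antisymm (sup_le inf_le_left ((span_singleton_le_iff_mem _ _).2 hy)) fun x hx ↦ ?_
  set c := f x / f y
  have hxc : x - c • y ∈ H ⊓ LinearMap.ker f :=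
    ⟨H.sub_mem hx (H.smul_mem c hy), by simp [c, hfy]⟩
  simpa using add_mem (mem_sup_left hxc) (mem_sup_right (smul_mem _ c (mem_span_singleton_self y)))

theorem finrank_inf_ker_add_one {H : Submodule K V} [FiniteDimensional K H] {f : V →ₗ[K] K}
    {y : V} (hy : y ∈ H) (hfy : f y ≠ 0) : finrank K ↥(H ⊓ LinearMap.ker f) + 1 = finrank K H := by
  have : FiniteDimensional K ↥(H ⊓ LinearMap.ker f) := finiteDimensional_of_le inf_le_left
  conv_rhs => rw [← inf_ker_sup_span_singleton_eq hy hfy]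
  exact (finrank_sup_span_singleton_of_notMem fun h ↦ hfy (mem_inf.1 h).2).symm

theorem exists_projection_of_disjoint {U₁ U₂ : Submodule K V} (h : Disjoint U₁ U₂) :
    ∃ π : V →ₗ[K] V, ∀ x ∈ U₁ ⊔ U₂, π x ∈ U₁ ∧ x - π x ∈ U₂ := by
  obtain ⟨C, hU₂C, hC⟩ := h.symm.exists_isCompl
  refine ⟨U₁.projection C hC.symm, fun x hx ↦ ⟨projection_apply_mem _ x, ?_⟩⟩
  obtain ⟨a, ha, z, hz, rfl⟩ := mem_sup.1 hx
  rwa [map_add, projection_apply_of_mem_left _ ha, projection_apply_of_mem_right _ (hU₂C hz),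
    add_zero, add_sub_cancel_left]

end Submodule

namespace LinearMap.BilinForm

theorem even_finrank_sub_finrank_inf_orthogonal (b : LinearMap.BilinForm K V) (H : Submodule K V)
    [FiniteDimensional K H] (halt : ∀ x ∈ H, b x x = 0) :
    Even (finrank K H - finrank K ↥(H ⊓ b.orthogonal H)) := by
  induction hn : finrank K H using Nat.strong_induction_on generalizing H with
  | _ n ih =>
  by_cases hiso : H ≤ b.orthogonal H
  · rw [inf_eq_left.2 hiso, hn, Nat.sub_self]
    exact .zero
  obtain ⟨y, hyH, hy⟩ := SetLike.not_le_iff_exists.1 hiso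
  obtain ⟨x, hxH, hxy⟩ : ∃ x ∈ H, b x y ≠ 0 := by
    simpa [mem_orthogonal_iff] using hy
  have hyx : b y x ≠ 0 := by
    have h := halt (x + y) (H.add_mem hxH hyH)
    simp only [map_add, LinearMap.add_apply, halt x hxH, halt y hyH] at h
    exact fun h' ↦ hxy (by linear_combination h - h')
  set H₁ := H ⊓ ker (b x)
  set H₂ := H₁ ⊓ ker (b y)
  have : FiniteDimensional K H₁ := Submodule.finiteDimensional_of_le inf_le_left
  have : FiniteDimensional K H₂ := Submodule.finiteDimensional_of_le inf_le_left
  have hH₂H : H₂ ≤ H := inf_le_left.trans inf_le_left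
  have hxH₁ : x ∈ H₁ := ⟨hxH, halt x hxH⟩
  have hH₁ : H₁ ⊔ K ∙ y = H := Submodule.inf_ker_sup_span_singleton_eq hyH hxy
  have hH₂ : H₂ ⊔ K ∙ x = H₁ := Submodule.inf_ker_sup_span_singleton_eq hxH₁ hyx
  -- `x, y` span a hyperbolic plane, whose orthogonal `H₂` inside `H` carries the same radical
  have hrad : H ⊓ b.orthogonal H = H₂ ⊓ b.orthogonal H₂ := by
    refine le_antisymm (fun s ⟨hs, hsH⟩ ↦ ⟨⟨⟨hs, hsH x hxH⟩, hsH y hyH⟩, orthogonal_le hH₂H hsH⟩)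
      fun s ⟨hs, hsH₂⟩ ↦ ⟨hH₂H hs, ?_⟩
    have : H ≤ ker (b.flip s) := by
      rw [← hH₁, ← hH₂]
      refine sup_le (sup_le (fun n hn ↦ hsH₂ n hn) ?_) ?_ <;>
        rw [span_singleton_le_iff_mem]
      exacts [hs.1.2, hs.2]
    exact fun n hn ↦ this hn
  have hrank : finrank K H₂ + 2 = n := by
    rw [← hn, ← Submodule.finrank_inf_ker_add_one hyH hxy,
      ← Submodule.finrank_inf_ker_add_one hxH₁ hyx]
  have hle : finrank K ↥(H₂ ⊓ b.orthogonal H₂) ≤ finrank K H₂ := Submodule.finrank_mono inf_le_left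
  have := ih _ (by omega) H₂ (fun z hz ↦ halt z (hH₂H hz)) rfl
  rw [hrad, ← hrank, Nat.even_iff]
  rw [Nat.even_iff] at this
  omega

end LinearMap.BilinForm

open QuadraticMap

variable {Q : QuadraticForm K V}

theorem mem_polarPerp_iff_le_ker {S : Submodule K V} {v : V} :
    v ∈ polarPerp Q S ↔ S ≤ LinearMap.ker ((polarBilin Q).flip v) :=
  Iff.rfl

theorem polarPerp_span_singleton (p : V) : polarPerp Q (K ∙ p) = LinearMap.ker (polarBilin Q p) :=
  LinearMap.BilinForm.orthogonal_span_singleton_eq_toLin_ker p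

theorem IsTotallySingular.polar_eq_zero {S : Submodule K V} (hS : IsTotallySingular Q S) {a b : V}
    (ha : a ∈ S) (hb : b ∈ S) : polar Q a b = 0 := by
  simp [polar, hS _ (S.add_mem ha hb), hS a ha, hS b hb]

theorem IsTotallySingular.le_polarPerp {U W : Submodule K V} (hW : IsTotallySingular Q W)
    (hUW : U ≤ W) : W ≤ polarPerp Q U :=
  fun _ hw _ hu ↦ hW.polar_eq_zero (hUW hu) hw

theorem polar_self_add_eq_zero {x z : V} (hx : Q x = 0) (hz : Q z = 0) (hxz : Q (x + z) = 0) :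
    polar Q x (x + z) = 0 := by
  rw [polar_add_right, polar_self, hx, smul_zero, zero_add, polar, hxz, hx, hz, sub_zero, sub_zero]

theorem polar_sub_eq_zero_of_mem {A B : Submodule K V} (hA : IsTotallySingular Q A)
    (hB : IsTotallySingular Q B) {h x s y : V} (hx : x ∈ A) (hhx : h - x ∈ B) (hy : y ∈ A)
    (hsy : s - y ∈ B) (hxs : polar Q x s = 0) : polar Q h (s - y) = 0 := by
  have hxy : polar Q x (s - y) = 0 := by rw [polar_sub_right, hxs, hA.polar_eq_zero hx hy, sub_zero]
  have := polar_add_left (Q := Q) x (h - x) (s - y)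
  rwa [add_sub_cancel, hxy, hB.polar_eq_zero hhx hsy, add_zero] at this

theorem finrank_inf_polarPerp_le_one {S U X : Submodule K V} [FiniteDimensional K U]
    (hS : S ⊓ polarPerp Q U = ⊥) (hXU : X ≤ U) (hrank : finrank K U ≤ finrank K X + 1) :
    finrank K ↥(S ⊓ polarPerp Q X) ≤ 1 := by
  rcases hXU.lt_or_eq with hlt | rfl
  · obtain ⟨e, heU, heX⟩ := SetLike.exists_of_lt hlt
    have hU : U = X ⊔ K ∙ e := eq_sup_span_singleton_of_finrank_le hXU heU heX hrank
    have hinj : Function.Injective (polarBilin Q e ∘ₗ (S ⊓ polarPerp Q X).subtype) := by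
      rw [← LinearMap.ker_eq_bot, eq_bot_iff]
      rintro ⟨s, hsS, hsX⟩ hes
      have hsU : s ∈ S ⊓ polarPerp Q U := by
        refine ⟨hsS, mem_polarPerp_iff_le_ker.2 (hU ▸ sup_le hsX ?_)⟩
        exact (span_singleton_le_iff_mem _ _).2 hes
      exact (mem_bot K).2 (Subtype.ext (by simpa [hS] using hsU))
    simpa using LinearMap.finrank_le_finrank_of_injective hinj
  · rw [hS, finrank_bot]
    exact zero_le_one

theorem inf_polarPerp_span_singleton_eq_inf_sup {U₁ U₂ U₃ W₁ W₂ : Submodule K V}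
    [FiniteDimensional K U₃] {p u : V} (hW₁ : IsTotallySingular Q W₁)
    (hW₂ : IsTotallySingular Q W₂) (hUW₁ : U₁ ≤ W₁) (hUW₂ : U₂ ≤ W₂) (hpW₁ : p ∈ W₁)
    (hpW₂ : p ∈ W₂) (hu : u ∈ U₃) (hpu : polar Q p u ≠ 0)
    (hrank : finrank K U₃ ≤ finrank K ↥(U₃ ⊓ (U₁ ⊔ U₂)) + 1) :
    U₃ ⊓ polarPerp Q (K ∙ p) = U₃ ⊓ (U₁ ⊔ U₂) := by
  have hle {U W : Submodule K V} (hW : IsTotallySingular Q W) (hUW : U ≤ W) (hpW : p ∈ W) :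
      U ≤ polarPerp Q (K ∙ p) :=
    hUW.trans (hW.le_polarPerp ((span_singleton_le_iff_mem _ _).2 hpW))
  refine (eq_of_le_of_finrank_le (inf_le_inf_left U₃ (sup_le (hle hW₁ hUW₁ hpW₁)
    (hle hW₂ hUW₂ hpW₂))) ?_).symm
  have := finrank_inf_ker_add_one (f := polarBilin Q p) hu hpu
  rw [polarPerp_span_singleton]
  omega

theorem inf_polarPerp_map_ne_bot_iff_odd {U₁ U₂ H : Submodule K V} [FiniteDimensional K U₁]
    [FiniteDimensional K H] (hU₁ : IsTotallySingular Q U₁) (hU₂ : IsTotallySingular Q U₂)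
    (hH : IsTotallySingular Q H) {π : V →ₗ[K] V} (hπ : ∀ h ∈ H, π h ∈ U₁ ∧ h - π h ∈ U₂)
    (hH₁ : H ⊓ polarPerp Q U₁ = ⊥) (hH₂ : H ⊓ U₂ = ⊥) (hrank : finrank K U₁ = finrank K H + 1) :
    H ⊓ polarPerp Q (H.map π) ≠ ⊥ ↔ Odd (finrank K H) := by
  have hinj : Function.Injective (π ∘ₗ H.subtype) := by
    rw [← LinearMap.ker_eq_bot, eq_bot_iff]
    rintro ⟨h, hh⟩ hπh
    have : h ∈ H ⊓ U₂ := ⟨hh, by simpa [show π h = 0 from hπh] using (hπ h hh).2⟩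
    simpa [hH₂] using this
  have hmap : finrank K (H.map π) = finrank K H := by
    have := LinearMap.finrank_range_of_inj hinj
    rwa [LinearMap.range_comp, Submodule.range_subtype] at this
  have hR : finrank K ↥(H ⊓ polarPerp Q (H.map π)) ≤ 1 :=
    finrank_inf_polarPerp_le_one hH₁ (map_le_iff_le_comap.2 fun h hh ↦ (hπ h hh).1) (by omega)
  have hRH : finrank K ↥(H ⊓ polarPerp Q (H.map π)) ≤ finrank K H :=
    Submodule.finrank_mono inf_le_left
  have halt : ∀ h ∈ H, polar Q (π h) h = 0 := fun h hh ↦ by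
    simpa using polar_self_add_eq_zero (hU₁ _ (hπ h hh).1) (hU₂ _ (hπ h hh).2)
      (by simpa using hH h hh)
  have heven := LinearMap.BilinForm.even_finrank_sub_finrank_inf_orthogonal
    ((polarBilin Q).comp π) H halt
  have hrad : LinearMap.BilinForm.orthogonal ((polarBilin Q).comp π) H = polarPerp Q (H.map π) := by
    ext s
    simp [LinearMap.BilinForm.mem_orthogonal_iff, polarPerp]
  rw [hrad, Nat.even_iff] at heven
  rw [Ne, ← Submodule.finrank_eq_zero, Nat.odd_iff]
  omega

theorem inf_polarPerp_map_ne_bot_of_sup_inf_ne_bot {U₁ U₂ U₃ W₁ W₂ H : Submodule K V} {p u : V}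
    {π : V →ₗ[K] V} (hW₁ : IsTotallySingular Q W₁) (hW₂ : IsTotallySingular Q W₂)
    (hUW₁ : U₁ ≤ W₁) (hUW₂ : U₂ ≤ W₂) (hp : W₁ ⊓ W₂ = K ∙ p) (hu : u ∈ U₃)
    (hpu : polar Q p u ≠ 0) (hH : U₃ ⊓ polarPerp Q (K ∙ p) = H)
    (hπ : ∀ h ∈ H, π h ∈ U₁ ∧ h - π h ∈ U₂) (hne : (U₃ ⊔ (W₂ ⊓ polarPerp Q U₃)) ⊓ W₁ ≠ ⊥) :
    H ⊓ polarPerp Q (H.map π) ≠ ⊥ := by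
  obtain ⟨v, ⟨hv, hvW₁⟩, hv0⟩ := exists_mem_ne_zero_of_ne_bot hne
  obtain ⟨s, hs, q, ⟨hqW₂, hqU₃⟩, rfl⟩ := mem_sup.1 hv
  have hpW : p ∈ W₁ ⊓ W₂ := hp ▸ mem_span_singleton_self p
  have hsH : s ∈ H := by
    rw [← hH, polarPerp_span_singleton]
    refine ⟨hs, ?_⟩
    show polar Q p s = 0
    have hpv := hW₁.polar_eq_zero hpW.1 hvW₁
    rwa [polar_add_right, hW₂.polar_eq_zero hpW.2 hqW₂, add_zero] at hpv
  have hsR : s ∈ polarPerp Q (H.map π) := by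
    rintro _ ⟨h, hh, rfl⟩
    show polar Q (π h) s = 0
    have hπv := hW₁.polar_eq_zero (hUW₁ (hπ h hh).1) hvW₁
    have hπq := hW₂.polar_eq_zero (hUW₂ (hπ h hh).2) hqW₂
    have hhq : polar Q h q = 0 := hqU₃ h ((hH ▸ inf_le_left : H ≤ U₃) hh)
    rw [polar_add_right] at hπv
    rw [polar_sub_left, hhq] at hπq
    linear_combination hπv + hπq
  refine (Submodule.ne_bot_iff _).2 ⟨s, ⟨hsH, hsR⟩, ?_⟩
  rintro rfl
  rw [zero_add] at hvW₁ hv0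
  obtain ⟨a, rfl⟩ := mem_span_singleton.1 (hp ▸ ⟨hvW₁, hqW₂⟩ : q ∈ K ∙ p)
  have hua : polar Q u (a • p) = 0 := hqU₃ u hu
  rw [polar_smul_right, polar_comm, smul_eq_mul, mul_eq_zero] at hua
  exact hv0 (by simp [hua.resolve_right hpu])

theorem sup_inf_ne_bot_of_inf_polarPerp_map_ne_bot {U₁ U₂ U₃ W₁ W₂ H : Submodule K V} {p u : V}
    {π : V →ₗ[K] V} (hW₁ : IsTotallySingular Q W₁) (hW₂ : IsTotallySingular Q W₂)
    (hUW₁ : U₁ ≤ W₁) (hUW₂ : U₂ ≤ W₂) (hpW₁ : p ∈ W₁) (hpW₂ : p ∈ W₂) (hpU₁ : p ∉ U₁)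
    (hu : u ∈ U₃) (hpu : polar Q p u ≠ 0) (hH : U₃ ⊓ polarPerp Q (K ∙ p) = H)
    (hπ : ∀ h ∈ H, π h ∈ U₁ ∧ h - π h ∈ U₂) (hH₂ : H ⊓ U₂ = ⊥)
    (hne : H ⊓ polarPerp Q (H.map π) ≠ ⊥) : (U₃ ⊔ (W₂ ⊓ polarPerp Q U₃)) ⊓ W₁ ≠ ⊥ := by
  obtain ⟨s, ⟨hsH, hsR⟩, hs0⟩ := exists_mem_ne_zero_of_ne_bot hne
  rw [polarPerp_span_singleton] at hH
  have hup : polar Q u p ≠ 0 := by rwa [polar_comm]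
  set γ := polar Q u (s - π s) / polar Q u p
  set q := γ • p - (s - π s)
  have hqU₃ : q ∈ polarPerp Q U₃ := by
    rw [mem_polarPerp_iff_le_ker, ← inf_ker_sup_span_singleton_eq (f := polarBilin Q p) hu hpu, hH]
    refine sup_le (fun h hh ↦ ?_) ((span_singleton_le_iff_mem _ _).2 ?_)
    · have hhp : polar Q h p = 0 := by
        rw [polar_comm]
        exact (hH ▸ hh : h ∈ U₃ ⊓ LinearMap.ker (polarBilin Q p)).2
      have hhs : polar Q h (s - π s) = 0 :=
        polar_sub_eq_zero_of_mem hW₁ hW₂ (hUW₁ (hπ h hh).1) (hUW₂ (hπ h hh).2)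
          (hUW₁ (hπ s hsH).1) (hUW₂ (hπ s hsH).2) (hsR (π h) (mem_map_of_mem hh))
      show polar Q h (γ • p - (s - π s)) = 0
      rw [polar_sub_right, polar_smul_right, hhp, hhs, smul_zero, sub_zero]
    · simp only [LinearMap.mem_ker, LinearMap.flip_apply, polarBilin_apply_apply, q,
        polar_sub_right, polar_smul_right, smul_eq_mul, γ]
      field_simp
      ring
  have hsq : s + q = π s + γ • p := by simp only [q]; abel
  refine (Submodule.ne_bot_iff _).2 ⟨s + q, ⟨add_mem (mem_sup_left (hH ▸ hsH).1) (mem_sup_right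
    ⟨W₂.sub_mem (W₂.smul_mem γ hpW₂) (hUW₂ (hπ s hsH).2), hqU₃⟩), ?_⟩, ?_⟩
  · rw [hsq]
    exact add_mem (hUW₁ (hπ s hsH).1) (W₁.smul_mem γ hpW₁)
  rw [hsq]
  intro h0
  have hγ : γ = 0 := by
    by_contra hγ
    refine hpU₁ ((U₁.smul_mem_iff hγ).1 ?_)
    rw [eq_neg_of_add_eq_zero_right h0]
    exact U₁.neg_mem (hπ s hsH).1
  rw [hγ, zero_smul, add_zero] at h0
  have hsU₂ := (hπ s hsH).2
  rw [h0, sub_zero] at hsU₂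
  have hsHU₂ : s ∈ H ⊓ U₂ := ⟨hsH, hsU₂⟩
  rw [hH₂] at hsHU₂
  exact hs0 ((mem_bot K).1 hsHU₂)

theorem sup_inf_ne_bot_iff_inf_polarPerp_map_ne_bot {U₁ U₂ U₃ W₁ W₂ H : Submodule K V} {p u : V}
    {π : V →ₗ[K] V} (hW₁ : IsTotallySingular Q W₁) (hW₂ : IsTotallySingular Q W₂)
    (hUW₁ : U₁ ≤ W₁) (hUW₂ : U₂ ≤ W₂) (hp : W₁ ⊓ W₂ = K ∙ p) (hpU₁ : p ∉ U₁) (hu : u ∈ U₃)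
    (hpu : polar Q p u ≠ 0) (hH : U₃ ⊓ polarPerp Q (K ∙ p) = H)
    (hπ : ∀ h ∈ H, π h ∈ U₁ ∧ h - π h ∈ U₂) (hH₂ : H ⊓ U₂ = ⊥) :
    (U₃ ⊔ (W₂ ⊓ polarPerp Q U₃)) ⊓ W₁ ≠ ⊥ ↔ H ⊓ polarPerp Q (H.map π) ≠ ⊥ := by
  have hpW : p ∈ W₁ ⊓ W₂ := hp ▸ mem_span_singleton_self p
  exact ⟨inf_polarPerp_map_ne_bot_of_sup_inf_ne_bot hW₁ hW₂ hUW₁ hUW₂ hp hu hpu hH hπ,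
    sup_inf_ne_bot_of_inf_polarPerp_map_ne_bot hW₁ hW₂ hUW₁ hUW₂ hpW.1 hpW.2 hpU₁ hu hpu hH hπ hH₂⟩


end

theorem upper_projectivity_image_iff_even_general
    {K V : Type*} [Field K] [AddCommGroup V] [Module K V]
    (Q : QuadraticForm K V)
    (m : ℕ) (hm : 2 ≤ m)
    (U₁ U₂ U₃ W₁ W₂ : Submodule K V)
    (hU₁ts : IsTotallySingular Q U₁) (hU₂ts : IsTotallySingular Q U₂)
    (hU₃ts : IsTotallySingular Q U₃)
    (hW₁ts : IsTotallySingular Q W₁) (hW₂ts : IsTotallySingular Q W₂)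
    (hU₁ : Module.finrank K U₁ = m)
    (hU₃ : Module.finrank K U₃ = m)
    (hUW₁ : U₁ ≤ W₁) (hUW₂ : U₂ ≤ W₂)
    (hmeet : Module.finrank K ↥(W₁ ⊓ W₂) = 1)
    (hU₃meet : Module.finrank K ↥(U₃ ⊓ (U₁ ⊔ U₂)) = m - 1)
    (hopp12 : U₁ ⊓ polarPerp Q U₂ = ⊥)
    (hopp31 : U₃ ⊓ polarPerp Q U₁ = ⊥)
    (hopp32 : U₃ ⊓ polarPerp Q U₂ = ⊥)
    (hnotcoll : ¬ U₃ ≤ polarPerp Q (W₁ ⊓ W₂)) :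
    (U₃ ⊔ (W₂ ⊓ polarPerp Q U₃)) ⊓ W₁ ≠ ⊥ ↔ Even m := by
  have : FiniteDimensional K U₁ := Module.finite_of_finrank_pos (by omega)
  have : FiniteDimensional K U₃ := Module.finite_of_finrank_pos (by omega)
  obtain ⟨p, hpW, hp0⟩ := exists_mem_ne_zero_of_ne_bot (p := W₁ ⊓ W₂) fun h ↦ by
    rw [h, finrank_bot] at hmeet
    exact zero_ne_one hmeet
  have hp := eq_span_singleton_of_mem_of_finrank_eq_one hmeet hpW hp0
  have hpU₁ : p ∉ U₁ := fun h ↦ hp0 <| (mem_bot K).1 <|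
    hopp12 ▸ ⟨h, hW₂ts.le_polarPerp hUW₂ hpW.2⟩
  rw [hp, polarPerp_span_singleton] at hnotcoll
  obtain ⟨u, hu, hpu⟩ := SetLike.not_le_iff_exists.1 hnotcoll
  have hH := inf_polarPerp_span_singleton_eq_inf_sup hW₁ts hW₂ts hUW₁ hUW₂ hpW.1 hpW.2 hu hpu
    (by omega)
  obtain ⟨π, hπ⟩ := exists_projection_of_disjoint (disjoint_iff.2 <| eq_bot_iff.2 <|
    hopp12 ▸ inf_le_inf_left U₁ (hU₂ts.le_polarPerp le_rfl))
  have : FiniteDimensional K ↥(U₃ ⊓ (U₁ ⊔ U₂)) := finiteDimensional_of_le inf_le_left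
  have hH₂ : U₃ ⊓ (U₁ ⊔ U₂) ⊓ U₂ = ⊥ :=
    eq_bot_iff.2 <| hopp32 ▸ inf_le_inf inf_le_left (hU₂ts.le_polarPerp le_rfl)
  have hπH : ∀ h ∈ U₃ ⊓ (U₁ ⊔ U₂), π h ∈ U₁ ∧ h - π h ∈ U₂ := fun h hh ↦ hπ h hh.2
  rw [sup_inf_ne_bot_iff_inf_polarPerp_map_ne_bot hW₁ts hW₂ts hUW₁ hUW₂ hp hpU₁ hu hpu hH hπH hH₂,
    inf_polarPerp_map_ne_bot_iff_odd hU₁ts hU₂ts (fun v (hv : v ∈ U₃ ⊓ _) ↦ hU₃ts v hv.1) hπH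
      (eq_bot_iff.2 <| hopp31 ▸ inf_le_inf_right _ inf_le_left) hH₂ (by omega), hU₃meet,
    Nat.odd_iff, Nat.even_iff]
  omega

/-- Let `Q` be a quadratic form with nondegenerate polar form, `m ≥ 2`,
`U₁, U₂, U₃` totally singular subspaces of dimension `m`, `W₁ ⊇ U₁`, `W₂ ⊇ U₂` totally
singular of dimension `m+1` meeting in a line, `U₃` meeting `U₁ + U₂` in dimension `m−1`,
with `U₁, U₂` opposite and `U₃` opposite both, and `U₃` not collinear with the point
`W₁ ∩ W₂`.  Then the image of `W₂` under the upper projectivity `U₂ ⋏ U₃ ⋏ U₁` equals `W₁`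
(i.e. `(U₃ + (W₂ ∩ U₃^⊥)) ∩ W₁ ≠ 0`) if and only if `m` is even. -/
theorem upper_projectivity_image_iff_even
    {K V : Type*} [Field K] [AddCommGroup V] [Module K V]
    (Q : QuadraticForm K V)
    (hnd : ∀ v : V, (∀ w : V, QuadraticMap.polar (⇑Q) v w = 0) → v = 0)
    (m : ℕ) (hm : 2 ≤ m)
    (U₁ U₂ U₃ W₁ W₂ : Submodule K V)
    (hU₁ts : IsTotallySingular Q U₁) (hU₂ts : IsTotallySingular Q U₂)
    (hU₃ts : IsTotallySingular Q U₃)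
    (hW₁ts : IsTotallySingular Q W₁) (hW₂ts : IsTotallySingular Q W₂)
    (hU₁ : Module.finrank K U₁ = m) (hU₂ : Module.finrank K U₂ = m)
    (hU₃ : Module.finrank K U₃ = m)
    (hW₁ : Module.finrank K W₁ = m + 1) (hW₂ : Module.finrank K W₂ = m + 1)
    (hUW₁ : U₁ ≤ W₁) (hUW₂ : U₂ ≤ W₂)
    (hmeet : Module.finrank K ↥(W₁ ⊓ W₂) = 1)
    (hU₃meet : Module.finrank K ↥(U₃ ⊓ (U₁ ⊔ U₂)) = m - 1)
    (hopp12 : U₁ ⊓ polarPerp Q U₂ = ⊥)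
    (hopp31 : U₃ ⊓ polarPerp Q U₁ = ⊥)
    (hopp32 : U₃ ⊓ polarPerp Q U₂ = ⊥)
    (hnotcoll : ¬ U₃ ≤ polarPerp Q (W₁ ⊓ W₂)) :
    (U₃ ⊔ (W₂ ⊓ polarPerp Q U₃)) ⊓ W₁ ≠ ⊥ ↔ Even m :=
  upper_projectivity_image_iff_even_general Q m hm U₁ U₂ U₃ W₁ W₂ hU₁ts hU₂ts hU₃ts hW₁ts hW₂ts hU₁
    hU₃ hUW₁ hUW₂ hmeet hU₃meet hopp12 hopp31 hopp32 hnotcoll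
end
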